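/- arXiv:1910.11230 — 6 statements merged into one kernel-verified Lean document; each statement's English description precedes it below -/
import Mathlib

section
/- Let M be a countable structure in a finite relational language. If M is finitely partitioned, then M has exactly one sibling: every countable structure that is bi-embeddable with M is isomorphic to M. -/
/-!
Call `x ~ y` when the transposition of `x` and `y` preserves every relation. This is an
equivalence relation, and an injective self-map moving each point within its `~`-class preserves
every relation, since on a finite tuple it agrees with a product of such transpositions. A finite
partition as in the hypothesis refines `~`, so there are finitely many classes. Given embeddings
`f : M ↪ N` and `g : N ↪ M`, the self-embedding `g ∘ f` reflects `~` and hence permutes the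
finitely many classes; following each cycle of this permutation shows that every class meets the
range of `g` in as many points as it has. A class-preserving bijection of `M` onto the range of
`g`, followed by `g⁻¹`, is then an isomorphism `M ≃[L] N`.
-/

open FirstOrder Language Set

universe u v w

namespace Stmt0

variable (L : FirstOrder.Language.{v, w})

/-- `M` is finitely partitioned: the universe admits a finite partition such that every
bijection of `M` fixing each piece setwise is an automorphism of `M`. -/
def IsFinitelyPartitioned (M : Type u) [L.Structure M] : Prop :=
  ∃ (n : ℕ) (C : Fin n → Set M),
    (∀ x : M, ∃! i, x ∈ C i) ∧
      ∀ σ : Equiv.Perm M, (∀ i, σ '' C i = C i) →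
        ∀ (m : ℕ) (R : L.Relations m) (v : Fin m → M),
          Structure.RelMap R (σ ∘ v) ↔ Structure.RelMap R v

theorem _root_.Equiv.Perm.comp_eq_of_le_comp {ι β : Type*} [Finite ι] [PartialOrder β]
    {f : ι → β} (σ : Equiv.Perm ι) (hf : f ≤ f ∘ σ) : f ∘ σ = f := by
  have iterate : ∀ k i, f i ≤ f ((σ ^ k) i) := by
    intro k
    induction k with
    | zero => exact fun i => le_rfl
    | succ k ih =>
      exact fun i => (ih i).trans <| by rw [pow_succ', Equiv.Perm.mul_apply]; exact hf _
  funext i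
  refine le_antisymm ?_ (hf i)
  obtain ⟨k, hk⟩ : ∃ k, orderOf σ = k + 1 :=
    Nat.exists_eq_succ_of_ne_zero (orderOf_pos σ).ne'
  calc f (σ i) ≤ f ((σ ^ k) (σ i)) := iterate k _
    _ = f i := by rw [← Equiv.Perm.mul_apply, ← pow_succ, ← hk, pow_orderOf_eq_one]; rfl

section Reflects

variable {α : Type*} {s : Setoid α} [Finite (Quotient s)] {h : α → α}

theorem _root_.Setoid.rel_apply_of_reflects (hrefl : ∀ x y, s (h x) (h y) → s x y) {x y : α}
    (hxy : s x y) : s (h x) (h y) := by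
  let φ : Quotient s → Quotient s := fun c => Quotient.mk'' (h c.out)
  have hφ : Function.Surjective φ := Finite.surjective_of_injective fun c d hcd => by
    rw [← c.out_eq', ← d.out_eq']
    exact Quotient.sound' (hrefl _ _ (Quotient.exact' hcd))
  obtain ⟨c, hc⟩ := hφ (Quotient.mk'' (h x))
  obtain ⟨d, hd⟩ := hφ (Quotient.mk'' (h y))
  have hcd : c = d := by
    rw [← c.out_eq', ← d.out_eq']
    exact Quotient.sound' <| s.trans' (hrefl _ _ (Quotient.exact' hc)) <|
      s.trans' hxy (s.symm' (hrefl _ _ (Quotient.exact' hd)))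
  exact Quotient.exact' (hc.symm.trans (hcd ▸ hd))

theorem _root_.Setoid.exists_equiv_of_reflects (hh : Function.Injective h)
    (hrefl : ∀ x y, s (h x) (h y) → s x y) {S : Set α} (hS : range h ⊆ S) :
    ∃ e : α ≃ S, ∀ x, s (e x) x := by
  let q : α → Quotient s := Quotient.mk''
  let Φ : Equiv.Perm (Quotient s) :=
    Equiv.ofBijective (Quotient.map' h fun _ _ => s.rel_apply_of_reflects hrefl) <|
      Finite.injective_iff_bijective.mp <| by
        rintro ⟨x⟩ ⟨y⟩ hxy
        exact Quotient.sound' (hrefl _ _ (Quotient.exact' hxy))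
  let E : Quotient s → Cardinal := fun c => Cardinal.mk {x // q x = c}
  let ES : Quotient s → Cardinal := fun c => Cardinal.mk {y : S // q y = c}
  have hES : ES ≤ E := fun c =>
    Cardinal.mk_le_of_injective (f := fun y => ⟨y.1.1, y.2⟩) fun y z hyz =>
      Subtype.ext (Subtype.ext (Subtype.ext_iff.mp hyz :))
  have hE : ∀ c, E c ≤ ES (Φ c) := fun c =>
    Cardinal.mk_le_of_injective (f := fun x => ⟨⟨h x, hS ⟨x, rfl⟩⟩, congrArg Φ x.2⟩)
      fun x y hxy => Subtype.ext (hh (congrArg (fun z => z.1.1) hxy))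
  have hcycle := Φ.comp_eq_of_le_comp (f := E) fun c => (hE c).trans (hES _)
  have hfibre : ∀ c, E c = ES c := by
    intro c
    obtain ⟨c, rfl⟩ := Φ.surjective c
    exact le_antisymm ((congrFun hcycle c).le.trans (hE c)) (hES _)
  let e := fun c => (Cardinal.eq.mp (hfibre c)).some
  exact ⟨Equiv.ofFiberEquiv e, fun x => Quotient.exact' (Equiv.ofFiberEquiv_map e x)⟩

end Reflects

section SwapEq

variable {L} {M : Type*} [L.Structure M]

variable (L) in
def PreservesRelMap (τ : M → M) : Prop :=
  ∀ (m : ℕ) (R : L.Relations m) (v : Fin m → M),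
    Structure.RelMap R (τ ∘ v) ↔ Structure.RelMap R v

theorem PreservesRelMap.comp {σ τ : M → M} (hσ : PreservesRelMap L σ)
    (hτ : PreservesRelMap L τ) : PreservesRelMap L (σ ∘ τ) :=
  fun m R v => (hσ m R (τ ∘ v)).trans (hτ m R v)

variable [DecidableEq M]

variable (L) in
def SwapEq (x y : M) : Prop :=
  PreservesRelMap L (Equiv.swap x y)

theorem SwapEq.refl (x : M) : SwapEq L x x := by
  simp [SwapEq, PreservesRelMap]

theorem SwapEq.symm {x y : M} (h : SwapEq L x y) : SwapEq L y x := by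
  rwa [SwapEq, Equiv.swap_comm]

theorem SwapEq.trans {x y z : M} (hxy : SwapEq L x y) (hyz : SwapEq L y z) : SwapEq L x z := by
  rcases eq_or_ne x y with rfl | hxy'
  · exact hyz
  rcases eq_or_ne x z with rfl | hxz'
  · exact SwapEq.refl x
  have hconj := Equiv.swap_mul_swap_mul_swap hxy' hxz'
  rw [SwapEq, ← Equiv.swap_comm, ← hconj]
  exact (hyz.comp hxy).comp hyz

variable (L M) in
def swapSetoid : Setoid M where
  r := SwapEq L
  iseqv := ⟨SwapEq.refl, SwapEq.symm, SwapEq.trans⟩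

theorem SwapEq.swap_apply {x y : M} (hxy : SwapEq L x y) (z : M) :
    SwapEq L (Equiv.swap x y z) z := by
  rcases eq_or_ne z x with rfl | hzx
  · rw [Equiv.swap_apply_left]; exact hxy.symm
  rcases eq_or_ne z y with rfl | hzy
  · rw [Equiv.swap_apply_right]; exact hxy
  rw [Equiv.swap_apply_of_ne_of_ne hzx hzy]
  exact SwapEq.refl z

theorem swapEq_of_embedding {N : Type*} [L.Structure N] [DecidableEq N] (φ : M ↪[L] N)
    {x y : M} (h : SwapEq L (φ x) (φ y)) : SwapEq L x y := by
  intro m R v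
  have hcomm : φ ∘ Equiv.swap x y ∘ v = Equiv.swap (φ x) (φ y) ∘ φ ∘ v :=
    funext fun k => φ.injective.map_swap x y (v k)
  rw [← φ.map_rel, hcomm, h, φ.map_rel]

theorem exists_perm_eqOn_of_swapEq {τ : M → M} (hτ : Function.Injective τ)
    (hτs : ∀ x, SwapEq L (τ x) x) (s : Finset M) :
    ∃ π : Equiv.Perm M,
      PreservesRelMap L π ∧ (∀ x, SwapEq L (π x) x) ∧ ∀ x ∈ s, π x = τ x := by
  induction s using Finset.induction_on with
  | empty => exact ⟨1, fun _ _ _ => Iff.rfl, SwapEq.refl, by simp⟩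
  | insert a s ha ih =>
    obtain ⟨π, hπ, hπs, hπτ⟩ := ih
    have hswap : SwapEq L (π a) (τ a) := (hπs a).trans (hτs a).symm
    refine ⟨Equiv.swap (π a) (τ a) * π, hswap.comp hπ,
      fun x => (hswap.swap_apply _).trans (hπs x), fun x hx => ?_⟩
    rcases Finset.mem_insert.mp hx with rfl | hx
    · exact Equiv.swap_apply_left _ _
    have hxa : x ≠ a := ne_of_mem_of_not_mem hx ha
    rw [Equiv.Perm.mul_apply, hπτ x hx]
    exact Equiv.swap_apply_of_ne_of_ne (hπτ x hx ▸ π.injective.ne hxa) (hτ.ne hxa)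

theorem preservesRelMap_of_injective_of_swapEq {τ : M → M} (hτ : Function.Injective τ)
    (hτs : ∀ x, SwapEq L (τ x) x) : PreservesRelMap L τ := by
  intro m R v
  obtain ⟨π, hπ, -, hπτ⟩ := exists_perm_eqOn_of_swapEq hτ hτs (Finset.univ.image v)
  have hτv : τ ∘ v = π ∘ v :=
    funext fun k => (hπτ (v k) (Finset.mem_image_of_mem v (Finset.mem_univ k))).symm
  rw [hτv]
  exact hπ m R v

theorem IsFinitelyPartitioned.finite_quotient (hM : IsFinitelyPartitioned L M) :
    Finite (Quotient (swapSetoid L M)) := by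
  obtain ⟨n, C, hC, hσ⟩ := hM
  choose piece hpiece using fun x => (hC x).exists
  have mem_iff : ∀ z i, z ∈ C i ↔ i = piece z :=
    fun z i => ⟨fun hz => (hC z).unique hz (hpiece z), fun h => h ▸ hpiece z⟩
  have swapEq_of_piece_eq : ∀ x y, piece x = piece y → SwapEq L x y := by
    intro x y hxy
    have piece_swap : ∀ z, piece (Equiv.swap x y z) = piece z := by
      intro z
      rw [Equiv.swap_apply_def]
      split_ifs with hzx hzy
      exacts [hzx ▸ hxy.symm, hzy ▸ hxy, rfl]
    refine hσ _ fun i => Set.ext fun z => ?_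
    rw [Equiv.image_eq_preimage_symm, Equiv.symm_swap, mem_preimage, mem_iff, mem_iff, piece_swap]
  refine Finite.of_injective (fun c : Quotient (swapSetoid L M) => piece c.out) fun c d hcd => ?_
  rw [← c.out_eq', ← d.out_eq']
  exact Quotient.sound' (swapEq_of_piece_eq _ _ hcd)

end SwapEq

theorem finitelyPartitioned_unique_sibling
    [L.IsRelational]
    (M : Type u) [L.Structure M]
    (hM : IsFinitelyPartitioned L M) :
    ∀ (N : Type u) [L.Structure N] [Countable N],
      Nonempty (M ↪[L] N) → Nonempty (N ↪[L] M) → Nonempty (M ≃[L] N) := by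
  classical
  rintro N _ _ ⟨f⟩ ⟨g⟩
  have := hM.finite_quotient
  obtain ⟨e, he⟩ := (swapSetoid L M).exists_equiv_of_reflects (g.comp f).injective
    (fun _ _ => swapEq_of_embedding (g.comp f)) (range_comp_subset_range f g)
  have hτ : PreservesRelMap L (Subtype.val ∘ e) :=
    preservesRelMap_of_injective_of_swapEq (Subtype.val_injective.comp e.injective) he
  let F : M ≃ N := e.trans (Equiv.ofInjective g g.injective).symm
  have hgF : g ∘ F = Subtype.val ∘ e :=
    funext fun x => Equiv.apply_ofInjective_symm g.injective (e x)
  refine ⟨⟨F, fun fn => isEmptyElim fn, fun R v => ?_⟩⟩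
  change Structure.RelMap R (F ∘ v) ↔ _
  rw [← g.map_rel, ← Function.comp_assoc, hgF]
  exact hτ _ R v

end Stmt0
end

section
/- Let M be a structure in a finite relational language and let p(x̄) be a quantifier-free k-type over M. Then p supports an infinite array if and only if p is coordinate-wise non-algebraic. -/
/- STATEMENT 5: Let `M` be a structure in a finite relational language and `p(x̄)` a
quantifier-free `k`-type over `M`.  Then `p` supports an infinite array if and only if `p`
is coordinate-wise non-algebraic. -/

open FirstOrder Language Set

universe u v w

namespace Stmt5

variable (L : FirstOrder.Language.{v, w})

/-- An elementary extension of `M`. -/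
structure EExt (M : Type u) [L.Structure M] where
  carrier : Type u
  [str : L.Structure carrier]
  emb : M ↪ₑ[L] carrier

attribute [instance] EExt.str

/-- The quantifier-free type of the `k`-tuple `c` over (the image of) `M`, where `g`
embeds `M` into the structure containing `c`. -/
def qfTypeOf {M : Type u} (k : ℕ) {N : Type u} [L.Structure N] (g : M → N)
    (c : Fin k → N) : Set (L.Formula (Fin k ⊕ M)) :=
  {φ | BoundedFormula.IsQF φ ∧ φ.Realize (Sum.elim c g)}

/-- `p` is a (complete) quantifier-free `k`-type over `M`: the quantifier-free type of some
`k`-tuple in some elementary extension of `M`. -/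
def IsQFType (M : Type u) [L.Structure M] (k : ℕ) (p : Set (L.Formula (Fin k ⊕ M))) : Prop :=
  ∃ (E : EExt L M) (c : Fin k → E.carrier), p = qfTypeOf L k (⇑E.emb) c

/-- `p` supports an infinite array: some elementary extension of `M` contains infinitely
many pairwise disjoint `k`-tuples realizing `p`. -/
def SupportsInfiniteArray (M : Type u) [L.Structure M] (k : ℕ)
    (p : Set (L.Formula (Fin k ⊕ M))) : Prop :=
  ∃ (E : EExt L M) (c : ℕ → Fin k → E.carrier),
    (∀ i j, i ≠ j → Disjoint (Set.range (c i)) (Set.range (c j))) ∧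
    ∀ (i : ℕ), ∀ φ ∈ p, Formula.Realize φ (Sum.elim (c i) ⇑E.emb)

/-- The formula `x_i ≠ b`, for `b ∈ M`. -/
def neqFormula {M : Type u} (k : ℕ) (i : Fin k) (b : M) : L.Formula (Fin k ⊕ M) :=
  (Term.equal (Term.var (Sum.inl i)) (Term.var (Sum.inr b))).not


/-! Write `p = tp(c/M)` with `c` in an elementary extension `N`. If two disjoint tuples realize
`p`, no `x_i = b` can be in `p`. Conversely, suppose no `c_i` lies in `M`. Since the language is
finite relational, the quantifier-free type of `c` over a finite set `S` of parameters is
implied by a single formula, the atomic diagram of `c` on `S`. Elementarity turns `n` disjoint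
realizations of that formula in `N` into `n` in `M`, and adding `c` gives `n + 1`; so there are
arbitrarily many. An ultrapower of `N` over the pairs `(S, n)` glues these finite arrays into an
infinite one. -/

section QuantifierFree

variable {L} {β : Type*} {N N' : Type*} [L.Structure N] [L.Structure N']

theorem Term.exists_eq_var [L.IsRelational] (t : L.Term (β ⊕ Fin 0)) :
    ∃ x, t = var (Sum.inl x) := by
  rcases t with (x | i) | ⟨f, _⟩
  · exact ⟨x, rfl⟩
  · exact i.elim0
  · exact isEmptyElim f

variable (L) in
def AtomicEquivOn (S : Set β) (u : β → N) (v : β → N') : Prop :=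
  (∀ x ∈ S, ∀ y ∈ S, u x = u y ↔ v x = v y) ∧
    ∀ {n} (R : L.Relations n) (xs : Fin n → β), (∀ i, xs i ∈ S) →
      (Structure.RelMap R (u ∘ xs) ↔ Structure.RelMap R (v ∘ xs))

theorem realize_iff_of_atomicEquivOn [L.IsRelational] [DecidableEq β] {φ : L.Formula β}
    (hφ : φ.IsQF) {S : Set β} (hS : ↑φ.freeVarFinset ⊆ S) {u : β → N} {v : β → N'}
    (h : AtomicEquivOn L S u v) : φ.Realize u ↔ φ.Realize v := by
  induction hφ with
  | falsum => exact Iff.rfl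
  | of_isAtomic hφ =>
    cases hφ with
    | equal t₁ t₂ =>
      obtain ⟨x, rfl⟩ := Term.exists_eq_var t₁
      obtain ⟨y, rfl⟩ := Term.exists_eq_var t₂
      simp only [Term.bdEqual, BoundedFormula.freeVarFinset, Term.varFinsetLeft,
        Finset.coe_union, Finset.coe_singleton, Set.union_subset_iff,
        Set.singleton_subset_iff] at hS
      exact h.1 x hS.1 y hS.2
    | rel R ts =>
      choose xs hxs using fun i => Term.exists_eq_var (ts i)
      obtain rfl : ts = fun i => var (Sum.inl (xs i)) := funext hxs
      exact h.2 R xs fun i => hS <| by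
        simp [Relations.boundedFormula, BoundedFormula.freeVarFinset, Term.varFinsetLeft]
  | imp _ _ ih₁ ih₂ =>
    simp only [BoundedFormula.freeVarFinset, Finset.coe_union, Set.union_subset_iff] at hS
    exact imp_congr (ih₁ hS.1) (ih₂ hS.2)

end QuantifierFree

section AtomicDiagram

variable {L} {β : Type*} {N N' : Type*} [L.Structure N] [L.Structure N']

open scoped Classical in
noncomputable def literal (φ : L.Formula β) (v : β → N) : L.Formula β :=
  if φ.Realize v then φ else φ.not

theorem realize_literal {φ : L.Formula β} {v : β → N} {u : β → N'} :
    (literal φ v).Realize u ↔ (φ.Realize u ↔ φ.Realize v) := by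
  unfold literal
  split_ifs with hv <;> simp [hv]

variable [Finite (Σ n, L.Relations n)]

variable (L) in
noncomputable def atomicDiagram (S : Finset β) (v : β → N) : L.Formula β :=
  (Formula.iInf fun xy : S × S => literal (Term.equal (var (xy.1 : β)) (var (xy.2 : β))) v) ⊓
    Formula.iInf fun R : Σ r : (Σ n, L.Relations n), Fin r.1 → S =>
      literal (R.1.2.formula fun i => var (R.2 i : β)) v

theorem realize_atomicDiagram {S : Finset β} {v : β → N} {u : β → N'} :
    (atomicDiagram L S v).Realize u ↔ AtomicEquivOn L S u v := by
  simp only [atomicDiagram, Formula.realize_inf, Formula.realize_iInf, realize_literal,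
    Formula.realize_equal, Formula.realize_rel, Term.realize_var, AtomicEquivOn]
  refine and_congr ⟨fun h x hx y hy => h (⟨x, hx⟩, ⟨y, hy⟩), fun h xy => h _ xy.1.2 _ xy.2.2⟩
    ⟨fun h n R xs hxs => h ⟨⟨n, R⟩, fun i => ⟨xs i, hxs i⟩⟩,
      fun h R => h R.1.2 _ fun i => (R.2 i).2⟩

theorem realize_atomicDiagram_self (S : Finset β) (v : β → N) : (atomicDiagram L S v).Realize v :=
  realize_atomicDiagram.2 ⟨fun _ _ _ _ => Iff.rfl, fun _ _ _ => Iff.rfl⟩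

end AtomicDiagram

section Arrays

variable {L} {M N : Type*} [L.Structure N] {α : Type*} [Finite α]

variable (L) in
/-- `∃ x̄₀ … x̄ₙ₋₁, (the x̄ⱼ are pairwise disjoint) ∧ ⋀ⱼ φ(x̄ⱼ)`, with parameters in `M`. -/
noncomputable def arrayFormula (φ : L.Formula (α ⊕ M)) (n : ℕ) : L.Formula M :=
  Formula.iExs (Fin n × α)
    ((Formula.iInf fun q : {q : (Fin n × α) × (Fin n × α) // q.1.1 ≠ q.2.1} =>
        (Term.equal (var (Sum.inr q.1.1)) (var (Sum.inr q.1.2))).not) ⊓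
      Formula.iInf fun j : Fin n => φ.relabel (Sum.elim (fun i => Sum.inr (j, i)) Sum.inl))

theorem realize_arrayFormula {φ : L.Formula (α ⊕ M)} {n : ℕ} {w : M → N} :
    (arrayFormula L φ n).Realize w ↔ ∃ d : Fin n → α → N,
      (∀ j j', j ≠ j' → Disjoint (range (d j)) (range (d j'))) ∧
        ∀ j, φ.Realize (Sum.elim (d j) w) := by
  have hval (g : Fin n × α → N) (j : Fin n) :
      Sum.elim w g ∘ Sum.elim (fun i => Sum.inr (j, i)) Sum.inl =
        Sum.elim (fun i => g (j, i)) w := by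
    ext (_ | _) <;> rfl
  simp only [arrayFormula, Formula.realize_iExs, Formula.realize_inf, Formula.realize_iInf,
    Formula.realize_not, Formula.realize_equal, Term.realize_var, Sum.elim_inr,
    Formula.realize_relabel, hval, disjoint_range_iff, Subtype.forall, Prod.forall]
  constructor
  · rintro ⟨g, hne, hφ⟩
    exact ⟨fun j i => g (j, i), fun j j' hj i i' => hne j i j' i' hj, hφ⟩
  · rintro ⟨d, hne, hφ⟩
    exact ⟨fun q => d q.1 q.2, fun j i j' i' hj => hne j j' hj i i', hφ⟩

/-- Elementarity copies `n` disjoint realizations of `φ` into `M`; together with `c`, which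
lies outside `M`, they are `n + 1` disjoint realizations. -/
theorem realize_arrayFormula_of_forall_ne [L.Structure M] (e : M ↪ₑ[L] N) {c : α → N}
    (hc : ∀ i b, c i ≠ e b) {φ : L.Formula (α ⊕ M)} (hφ : φ.Realize (Sum.elim c e)) (n : ℕ) :
    (arrayFormula L φ n).Realize e := by
  induction n with
  | zero => exact realize_arrayFormula.2 ⟨Fin.elim0, fun j => j.elim0, fun j => j.elim0⟩
  | succ n ih =>
    obtain ⟨d, hd, hdφ⟩ := realize_arrayFormula.1 ((e.map_formula _ id).1 ih)
    refine realize_arrayFormula.2 ⟨Fin.cons c fun j => e ∘ d j, ?_, ?_⟩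
    · have hcd (j) : Disjoint (range c) (range (e ∘ d j)) :=
        disjoint_range_iff.2 fun i i' => hc i (d j i')
      intro j j' hj
      cases j using Fin.cases <;> cases j' using Fin.cases
      · exact absurd rfl hj
      · exact hcd _
      · exact (hcd _).symm
      · simpa only [Fin.cons_succ, range_comp, disjoint_image_iff e.injective] using
          hd _ _ (Fin.succ_injective _ |>.ne_iff.1 hj)
    · intro j
      cases j using Fin.cases
      · simpa using hφ
      · simpa [Sum.comp_elim] using (e.map_formula φ (Sum.elim (d _) id)).2 (hdφ _)

theorem exists_seq_disjoint_realizations_of_forall_ne [L.Structure M] (e : M ↪ₑ[L] N)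
    {c : α → N} (hc : ∀ i b, c i ≠ e b) {φ : L.Formula (α ⊕ M)} (hφ : φ.Realize (Sum.elim c e))
    (n : ℕ) :
    ∃ d : ℕ → α → N,
      (∀ j j', j < n → j' < n → j ≠ j' → Disjoint (range (d j)) (range (d j'))) ∧
        ∀ j, φ.Realize (Sum.elim (d j) e) := by
  obtain ⟨d, hd, hdφ⟩ := realize_arrayFormula.1 (realize_arrayFormula_of_forall_ne e hc hφ n)
  refine ⟨fun j => if h : j < n then d ⟨j, h⟩ else c, fun j j' hj hj' hne => ?_, fun j => ?_⟩
  · simpa only [dif_pos hj, dif_pos hj'] using hd _ _ (Fin.ne_of_val_ne hne)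
  · dsimp only
    split_ifs
    exacts [hdφ _, hφ]

end Arrays

section Ultrapower

variable {L}

noncomputable def ultrapowerDiagonal {I : Type*} (U : Ultrafilter I) (N : Type*)
    [L.Structure N] [Nonempty N] : N ↪ₑ[L] (U : Filter I).Product fun _ => N where
  toFun a := ((fun _ => a : I → N) : (U : Filter I).Product fun _ => N)
  map_formula' _ φ x :=
    (Ultraproduct.realize_formula_cast φ fun i _ => x i).trans Filter.eventually_const

theorem supportsInfiniteArray_of_eventually {M N : Type u} [L.Structure M] [L.Structure N]
    [Nonempty N] {I : Type u} (U : Ultrafilter I) (e : M ↪ₑ[L] N) {k : ℕ}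
    {p : Set (L.Formula (Fin k ⊕ M))} (W : I → ℕ → Fin k → N)
    (hW : ∀ j j', j ≠ j' → ∀ᶠ x in U, Disjoint (range (W x j)) (range (W x j')))
    (hWp : ∀ j, ∀ φ ∈ p, ∀ᶠ x in U, φ.Realize (Sum.elim (W x j) e)) :
    SupportsInfiniteArray L M k p := by
  refine ⟨⟨_, (ultrapowerDiagonal U N).comp e⟩,
    fun j i => ((fun x => W x j i : I → N) : (U : Filter I).Product fun _ => N), ?_, ?_⟩
  · intro j j' hj
    refine disjoint_range_iff.2 fun i i' heq => ?_
    obtain ⟨x, hx, hWx⟩ := ((Quotient.eq''.1 heq).and (hW j j' hj)).exists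
    exact disjoint_range_iff.1 hWx i i' hx
  · intro j φ hφ
    have hval : Sum.elim (fun i => ((fun x => W x j i : I → N) : (U : Filter I).Product _))
        ((ultrapowerDiagonal U N).comp e) =
          fun z => ((Sum.elim (fun i x => W x j i) (fun b _ => e b) z : I → N) :
            (U : Filter I).Product _) := by
      ext (_ | _) <;> rfl
    change φ.Realize (M := (U : Filter I).Product fun _ => N) _
    rw [hval]
    refine (Ultraproduct.realize_formula_cast φ _).2 <| (hWp j φ hφ).mono fun x hx => ?_
    convert hx using 1
    ext (_ | _) <;> rfl

end Ultrapower

section QFTypes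

variable {L} {M N : Type u} [L.Structure N] {k : ℕ}

theorem isQF_neqFormula {i : Fin k} {b : M} : (neqFormula L k i b).IsQF :=
  (BoundedFormula.IsAtomic.equal _ _).isQF.not

theorem neqFormula_mem_qfTypeOf_iff {g : M → N} {c : Fin k → N} {i : Fin k} {b : M} :
    neqFormula L k i b ∈ qfTypeOf L k g c ↔ c i ≠ g b := by
  show BoundedFormula.IsQF (neqFormula L k i b) ∧ _ ↔ _
  rw [and_iff_right isQF_neqFormula]
  simp [neqFormula, Formula.realize_equal]

theorem equal_mem_qfTypeOf_of_eq {g : M → N} {c : Fin k → N} {i : Fin k} {b : M}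
    (h : c i = g b) :
    Term.equal (var (Sum.inl i)) (var (Sum.inr b)) ∈ qfTypeOf L k g c :=
  ⟨(BoundedFormula.IsAtomic.equal _ _).isQF, by simpa [Formula.realize_equal] using h⟩

theorem ne_of_supportsInfiniteArray_qfTypeOf [L.Structure M] {g : M → N} {c : Fin k → N}
    (h : SupportsInfiniteArray L M k (qfTypeOf L k g c)) (i : Fin k) (b : M) : c i ≠ g b := by
  obtain ⟨E, d, hd, hdp⟩ := h
  intro hcb
  have h0 := hdp 0 _ (equal_mem_qfTypeOf_of_eq hcb)
  have h1 := hdp 1 _ (equal_mem_qfTypeOf_of_eq hcb)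
  simp only [Formula.realize_equal, Term.realize_var, Sum.elim_inl, Sum.elim_inr] at h0 h1
  exact disjoint_range_iff.1 (hd 0 1 zero_ne_one) i i (h0.trans h1.symm)

end QFTypes

/-- A quantifier-free `k`-type over `M` supports an infinite array iff it is coordinate-wise
non-algebraic, i.e. contains `x_i ≠ b` for every variable `x_i` and every `b ∈ M`. -/
theorem supportsInfiniteArray_iff_coordinatewise_nonalgebraic
    [L.IsRelational] [Finite (Σ n, L.Relations n)]
    (M : Type u) [L.Structure M] (k : ℕ)
    (p : Set (L.Formula (Fin k ⊕ M))) (hp : IsQFType L M k p) :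
    SupportsInfiniteArray L M k p ↔ ∀ (i : Fin k) (b : M), neqFormula L k i b ∈ p := by
  classical
  obtain ⟨E, c, rfl⟩ := hp
  simp only [neqFormula_mem_qfTypeOf_iff]
  refine ⟨ne_of_supportsInfiniteArray_qfTypeOf, fun hc => ?_⟩
  rcases isEmpty_or_nonempty (Fin k) with _ | ⟨⟨i₀⟩⟩
  · exact ⟨E, fun _ => c, fun _ _ _ => by simp [range_eq_empty], fun _ _ hφ => hφ.2⟩
  have : Nonempty E.carrier := ⟨c i₀⟩
  choose W hW hWdiag using fun x : Finset (Fin k ⊕ M) × ℕ =>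
    exists_seq_disjoint_realizations_of_forall_ne E.emb hc
      (realize_atomicDiagram_self (L := L) x.1 (Sum.elim c E.emb)) x.2
  let U := Ultrafilter.of (Filter.atTop : Filter (Finset (Fin k ⊕ M) × ℕ))
  have hU (S : Finset (Fin k ⊕ M)) (n : ℕ) :
      ∀ᶠ x : Finset (Fin k ⊕ M) × ℕ in U, S ⊆ x.1 ∧ n ≤ x.2 :=
    Ultrafilter.of_le _ (Filter.eventually_ge_atTop (S, n))
  refine supportsInfiniteArray_of_eventually U E.emb W (fun j j' hj => ?_) fun j φ hφ => ?_
  · exact (hU ∅ (max j j' + 1)).mono fun x hx => hW x j j' (by omega) (by omega) hj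
  · exact (hU φ.freeVarFinset 0).mono fun x hx =>
      (realize_iff_of_atomicEquivOn hφ.1 hx.1 (realize_atomicDiagram.1 (hWdiag x j))).2 hφ.2

end Stmt5
end

section
/- Let M be a structure in a finite relational language, let A ⊆ M^(k) be a set of pairwise disjoint k-tuples that is totally indiscernible over its complement, and let B ⊆ A. Then B is totally indiscernible over its complement. -/
/- STATEMENT 9: Let `M` be a structure in a finite relational language and `A ⊆ M^(k)` a set
of pairwise disjoint `k`-tuples that is totally indiscernible over its complement.  Then any
`B ⊆ A` is totally indiscernible over its complement. -/

open FirstOrder Language Set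

universe u v w

namespace Stmt9

variable (L : FirstOrder.Language.{v, w})

/-- Equality of quantifier-free types of two tuples over a parameter set. -/
def QFTypeEqOn {M : Type u} [L.Structure M] {α : Type} (c c' : α → M) (A : Set M) : Prop :=
  ∀ (n : ℕ) (φ : L.Formula (α ⊕ Fin n)), BoundedFormula.IsQF φ →
    ∀ e : Fin n → M, (∀ i, e i ∈ A) →
      (φ.Realize (Sum.elim c e) ↔ φ.Realize (Sum.elim c' e))

/-- A set of `k`-tuples is totally indiscernible over its complement `M ∖ ⋃C`. -/
def TotIndiscOverCompl {M : Type u} [L.Structure M] (k : ℕ) (C : Set (Fin k → M)) : Prop :=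
  ∀ (n : ℕ) (f g : Fin n → (Fin k → M)),
    (∀ i, f i ∈ C) → (∀ i, g i ∈ C) → Function.Injective f → Function.Injective g →
    QFTypeEqOn L (fun p : Fin n × Fin k => f p.1 p.2) (fun p : Fin n × Fin k => g p.1 p.2)
      {x | ∀ a ∈ C, x ∉ Set.range a}

/-!
A parameter from `M ∖ ⋃B` that is not in `M ∖ ⋃A` lies in some tuple of `A ∖ B`. A formula uses
only finitely many parameters, so adjoin the finitely many tuples of `A ∖ B` containing them to
both `f` and `g`: this yields two injective families in `A`, which have the same type over
`M ∖ ⋃A`. Then the adjoined tuples, common to both sides, can be used as parameters.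
-/

variable {L} {M : Type u} [L.Structure M] {α β : Type} {c c' : α → M} {P : Set M}

theorem QFTypeEqOn.realize_relabel_iff (h : QFTypeEqOn L c c' P) {m m' : ℕ}
    {φ : L.Formula (β ⊕ Fin m)} (hφ : φ.IsQF) (r : β ⊕ Fin m → α ⊕ Fin m')
    {e : Fin m' → M} (he : ∀ i, e i ∈ P) :
    φ.Realize (Sum.elim c e ∘ r) ↔ φ.Realize (Sum.elim c' e ∘ r) := by
  simpa only [Formula.realize_relabel] using h m' (φ.relabel r) (hφ.relabel (Sum.inl ∘ r)) e he

theorem QFTypeEqOn.comp (h : QFTypeEqOn L c c' P) (σ : β → α) :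
    QFTypeEqOn L (c ∘ σ) (c' ∘ σ) P := by
  intro m φ hφ e he
  simpa only [Sum.elim_comp_map, Function.comp_id] using
    h.realize_relabel_iff hφ (Sum.map σ id) he

theorem QFTypeEqOn.union_range {d : β → M} (h : QFTypeEqOn L (Sum.elim c d) (Sum.elim c' d) P) :
    QFTypeEqOn L c c' (P ∪ range d) := by
  classical
  intro m φ hφ e he
  let eP := Fintype.equivFin {j : Fin m // e j ∈ P}
  have hd : ∀ j, e j ∉ P → ∃ b, d b = e j := fun j hj => (he j).resolve_left hj
  let r : α ⊕ Fin m → (α ⊕ β) ⊕ Fin (Fintype.card {j : Fin m // e j ∈ P}) :=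
    Sum.elim (Sum.inl ∘ Sum.inl) fun j =>
      if hj : e j ∈ P then Sum.inr (eP ⟨j, hj⟩) else Sum.inl (Sum.inr (hd j hj).choose)
  have hr : ∀ c₀ : α → M,
      Sum.elim (Sum.elim c₀ d) (fun i => e (eP.symm i)) ∘ r = Sum.elim c₀ e := by
    intro c₀
    funext x
    rcases x with a | j
    · rfl
    · by_cases hj : e j ∈ P
      · simp [r, hj]
      · simp [r, hj, (hd j hj).choose_spec]
  have := h.realize_relabel_iff hφ r fun i => (eP.symm i).2
  rwa [hr, hr] at this

theorem exists_injective_fin_covering {X ι : Type*} {C : Set (ι → X)} {S : Set X}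
    (hS : S.Finite) (hSC : S ⊆ ⋃ a ∈ C, range a) :
    ∃ (t : ℕ) (h : Fin t → ι → X), Function.Injective h ∧ (∀ i, h i ∈ C) ∧
      S ⊆ range fun p : Fin t × ι => h p.1 p.2 := by
  have := hS.to_subtype
  choose a haC hxa using fun x : S => mem_iUnion₂.1 (hSC x.2)
  obtain ⟨t, h, hinj, hrange⟩ := (finite_range a).fin_param
  refine ⟨t, h, hinj, fun i => ?_, fun x hx => ?_⟩
  · obtain ⟨x, hx⟩ : h i ∈ range a := hrange ▸ mem_range_self i
    exact hx ▸ haC x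
  · obtain ⟨l, hl⟩ : a ⟨x, hx⟩ ∈ range h := hrange ▸ mem_range_self _
    obtain ⟨j, hj⟩ := hxa ⟨x, hx⟩
    exact ⟨(l, j), by simp only [hl, hj]⟩

theorem TotIndiscOverCompl.qfTypeEqOn_union {k n t : ℕ} {C : Set (Fin k → M)}
    (hTI : TotIndiscOverCompl L k C) {f g : Fin n → Fin k → M} {h : Fin t → Fin k → M}
    (hf : ∀ i, f i ∈ C) (hg : ∀ i, g i ∈ C) (hh : ∀ i, h i ∈ C)
    (hfinj : Function.Injective f) (hginj : Function.Injective g) (hhinj : Function.Injective h)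
    (hfh : ∀ i j, f i ≠ h j) (hgh : ∀ i j, g i ≠ h j) :
    QFTypeEqOn L (fun p : Fin n × Fin k => f p.1 p.2) (fun p : Fin n × Fin k => g p.1 p.2)
      ({x | ∀ a ∈ C, x ∉ range a} ∪ range fun p : Fin t × Fin k => h p.1 p.2) := by
  have happend := hTI (n + t) (Fin.append f h) (Fin.append g h)
    ((Fin.forall_fin_add _).2 ⟨by simpa using hf, by simpa using hh⟩)
    ((Fin.forall_fin_add _).2 ⟨by simpa using hg, by simpa using hh⟩)
    (Fin.append_injective_iff.2 ⟨hfinj, hhinj, hfh⟩)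
    (Fin.append_injective_iff.2 ⟨hginj, hhinj, hgh⟩)
  let σ : (Fin n × Fin k) ⊕ (Fin t × Fin k) → Fin (n + t) × Fin k :=
    Sum.elim (Prod.map (Fin.castAdd t) id) (Prod.map (Fin.natAdd n) id)
  have hσ : ∀ u : Fin n → Fin k → M, (fun p : Fin (n + t) × Fin k => Fin.append u h p.1 p.2) ∘ σ =
      Sum.elim (fun p => u p.1 p.2) (fun p => h p.1 p.2) := by
    intro u
    funext x
    rcases x with p | p <;> simp [σ]
  have := happend.comp σ
  rw [hσ, hσ] at this
  exact this.union_range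

theorem totIndiscOverCompl_subset_general
    (M : Type u) [L.Structure M] (k : ℕ) (A B : Set (Fin k → M))
    (hTI : TotIndiscOverCompl L k A) (hBA : B ⊆ A) :
    TotIndiscOverCompl L k B := by
  intro n f g hf hg hfinj hginj m φ hφ e he
  have hcover : range e \ {x | ∀ a ∈ A, x ∉ range a} ⊆ ⋃ a ∈ A \ B, range a := by
    rintro _ ⟨⟨j, rfl⟩, hj⟩
    obtain ⟨a, ha, hja⟩ : ∃ a ∈ A, e j ∈ range a := by simpa using hj
    exact mem_biUnion ⟨ha, fun hb => he j a hb hja⟩ hja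
  obtain ⟨t, h, hinj, hhAB, hcovered⟩ :=
    exists_injective_fin_covering ((finite_range e).sdiff) hcover
  have hne : ∀ {u : Fin n → Fin k → M}, (∀ i, u i ∈ B) → ∀ i j, u i ≠ h j :=
    fun hu i j hij => (hhAB j).2 (hij ▸ hu i)
  refine hTI.qfTypeEqOn_union (fun i => hBA (hf i)) (fun i => hBA (hg i)) (fun i => (hhAB i).1)
    hfinj hginj hinj (hne hf) (hne hg) m φ hφ e
    fun j => (em _).imp_right fun hj => hcovered ⟨mem_range_self j, hj⟩

/-- Total indiscernibility over the complement passes to subsets. -/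
theorem totIndiscOverCompl_subset
    [L.IsRelational] [Finite (Σ n, L.Relations n)]
    (M : Type u) [L.Structure M] (k : ℕ) (A B : Set (Fin k → M))
    (hInj : ∀ a ∈ A, Function.Injective a)
    (hDisj : ∀ a ∈ A, ∀ b ∈ A, a ≠ b → Disjoint (Set.range a) (Set.range b))
    (hTI : TotIndiscOverCompl L k A) (hBA : B ⊆ A) :
    TotIndiscOverCompl L k B :=
  totIndiscOverCompl_subset_general M k A B hTI hBA

end Stmt9
end

section
/- Let M be a structure in a finite relational language and suppose A and B are k-cliques in M with A ∩ B ≠ ∅ and such that no element of a tuple in A ∖ B equals an element of a tuple in B ∖ A. Then A ∪ B is a k-clique. -/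
/-! For injective tuples `a`, `b` with disjoint ranges, `a` and `b` are exchangeable exactly
when the permutation of `M` swapping each `a i` with `b i` preserves every quantifier-free
formula.  The only pairs of `A ∪ B` not already in `A` or in `B` are `a ∈ A ∖ B`, `b ∈ B ∖ A`,
whose ranges are disjoint by hypothesis; for `c ∈ A ∩ B` the transposition identity
`(a b) = (a c) (c b) (a c)` writes the exchange of `a` and `b` as a composite of exchanges that
preserve quantifier-free formulas. -/

open FirstOrder Language Set

universe u v w

namespace Stmt11

variable (L : FirstOrder.Language.{v, w})

/-- Equality of quantifier-free types of two tuples over a parameter set. -/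
def QFTypeEqOn {M : Type u} [L.Structure M] {α : Type} (c c' : α → M) (A : Set M) : Prop :=
  ∀ (n : ℕ) (φ : L.Formula (α ⊕ Fin n)), BoundedFormula.IsQF φ →
    ∀ e : Fin n → M, (∀ i, e i ∈ A) →
      (φ.Realize (Sum.elim c e) ↔ φ.Realize (Sum.elim c' e))

def Exchangeable {M : Type u} [L.Structure M] {k : ℕ} (a b : Fin k → M) : Prop :=
  Disjoint (Set.range a) (Set.range b) ∧
    QFTypeEqOn L (Sum.elim a b) (Sum.elim b a) ((Set.range a ∪ Set.range b)ᶜ)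

def IsKClique {M : Type u} [L.Structure M] (k : ℕ) (C : Set (Fin k → M)) : Prop :=
  C.Nonempty ∧ (∀ a ∈ C, Function.Injective a) ∧
    ∀ a ∈ C, ∀ b ∈ C, a ≠ b → Exchangeable L a b

section

variable {L} {M : Type u} [L.Structure M] {k : ℕ}

open scoped Classical in
/-- A permutation of `M`, the product of the transpositions `a i ↔ b i`, only when `a` and `b`
are injective with disjoint ranges. -/
noncomputable def exchange (a b : Fin k → M) (x : M) : M :=
  if h : x ∈ range a then b h.choose else if h : x ∈ range b then a h.choose else x

section exchange

variable {a b : Fin k → M}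

theorem exchange_apply_left (ha : a.Injective) (i : Fin k) : exchange a b (a i) = b i := by
  have h : a i ∈ range a := mem_range_self i
  rw [exchange, dif_pos h, ha h.choose_spec]

theorem exchange_apply_right (hb : b.Injective) (hab : Disjoint (range a) (range b)) (i : Fin k) :
    exchange a b (b i) = a i := by
  have h : b i ∈ range b := mem_range_self i
  rw [exchange, dif_neg (disjoint_right.mp hab h), dif_pos h, hb h.choose_spec]

theorem exchange_apply_of_notMem {x : M} (hx : x ∉ range a ∪ range b) : exchange a b x = x := by
  rw [mem_union, not_or] at hx
  rw [exchange, dif_neg hx.1, dif_neg hx.2]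

theorem exchange_comp_sumElim (ha : a.Injective) (hb : b.Injective)
    (hab : Disjoint (range a) (range b)) {γ : Type*} {e : γ → M}
    (he : ∀ j, e j ∉ range a ∪ range b) :
    exchange a b ∘ Sum.elim (Sum.elim a b) e = Sum.elim (Sum.elim b a) e := by
  funext x
  rcases x with (i | i) | j
  · exact exchange_apply_left ha i
  · exact exchange_apply_right hb hab i
  · exact exchange_apply_of_notMem (he j)

theorem exchange_eq_comp {c : Fin k → M} (ha : a.Injective) (hb : b.Injective)
    (hc : c.Injective) (hab : Disjoint (range a) (range b))
    (hac : Disjoint (range a) (range c)) (hcb : Disjoint (range c) (range b)) :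
    exchange a b = exchange a c ∘ exchange c b ∘ exchange a c := by
  have hb_ac (i : Fin k) : b i ∉ range a ∪ range c := fun h =>
    h.elim (disjoint_right.mp hab (mem_range_self i)) (disjoint_right.mp hcb (mem_range_self i))
  have ha_cb (i : Fin k) : a i ∉ range c ∪ range b := fun h =>
    h.elim (disjoint_left.mp hac (mem_range_self i)) (disjoint_left.mp hab (mem_range_self i))
  have hc_ab (i : Fin k) : c i ∉ range a ∪ range b := fun h =>
    h.elim (disjoint_right.mp hac (mem_range_self i)) (disjoint_left.mp hcb (mem_range_self i))
  funext x
  simp only [Function.comp_apply]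
  by_cases hxa : x ∈ range a
  · obtain ⟨i, rfl⟩ := hxa
    rw [exchange_apply_left ha, exchange_apply_left ha, exchange_apply_left hc,
      exchange_apply_of_notMem (hb_ac i)]
  by_cases hxb : x ∈ range b
  · obtain ⟨i, rfl⟩ := hxb
    rw [exchange_apply_right hb hab, exchange_apply_of_notMem (hb_ac i),
      exchange_apply_right hb hcb, exchange_apply_right hc hac]
  by_cases hxc : x ∈ range c
  · obtain ⟨i, rfl⟩ := hxc
    rw [exchange_apply_of_notMem (hc_ab i), exchange_apply_right hc hac,
      exchange_apply_of_notMem (ha_cb i), exchange_apply_left ha]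
  have hx_ab : exchange a b x = x := exchange_apply_of_notMem (by simp [hxa, hxb])
  have hx_ac : exchange a c x = x := exchange_apply_of_notMem (by simp [hxa, hxc])
  have hx_cb : exchange c b x = x := exchange_apply_of_notMem (by simp [hxc, hxb])
  rw [hx_ac, hx_cb, hx_ac, hx_ab]

end exchange

variable (L) in
def PreservesQF (f : M → M) : Prop :=
  ∀ (β : Type) [Finite β] (φ : L.Formula β), BoundedFormula.IsQF φ →
    ∀ w : β → M, φ.Realize (f ∘ w) ↔ φ.Realize w

theorem PreservesQF.comp {f g : M → M} (hf : PreservesQF L f) (hg : PreservesQF L g) :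
    PreservesQF L (f ∘ g) := fun β _ φ hφ w => (hf β φ hφ (g ∘ w)).trans (hg β φ hφ w)

theorem exists_eq_sumElim_comp {β : Type} [Finite β] (a b : Fin k → M) (w : β → M) :
    ∃ (n : ℕ) (e : Fin n → M) (t : β → (Fin k ⊕ Fin k) ⊕ Fin n),
      (∀ j, e j ∉ range a ∪ range b) ∧ w = Sum.elim (Sum.elim a b) e ∘ t := by
  classical
  obtain ⟨n, ⟨σ⟩⟩ := Finite.exists_equiv_fin {x // w x ∉ range a ∪ range b}
  refine ⟨n, fun j => w (σ.symm j), fun x =>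
    if ha : w x ∈ range a then .inl (.inl ha.choose)
    else if hb : w x ∈ range b then .inl (.inr hb.choose)
    else .inr (σ ⟨x, by simp [ha, hb]⟩), fun j => (σ.symm j).2, ?_⟩
  funext x
  simp only [Function.comp_apply]
  by_cases ha : w x ∈ range a
  · rw [dif_pos ha]
    exact ha.choose_spec.symm
  by_cases hb : w x ∈ range b
  · rw [dif_neg ha, dif_pos hb]
    exact hb.choose_spec.symm
  · rw [dif_neg ha, dif_neg hb]
    simp

theorem exchangeable_iff_preservesQF {a b : Fin k → M} (ha : a.Injective) (hb : b.Injective)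
    (hab : Disjoint (range a) (range b)) :
    Exchangeable L a b ↔ PreservesQF L (exchange a b) := by
  refine ⟨fun hex => ?_, fun h => ⟨hab, fun n φ hφ e he => ?_⟩⟩
  · intro β _ φ hφ w
    obtain ⟨n, e, t, he, rfl⟩ := exists_eq_sumElim_comp a b w
    rw [← Function.comp_assoc, exchange_comp_sumElim ha hb hab he, ← Formula.realize_relabel,
      ← Formula.realize_relabel]
    exact (hex.2 n (φ.relabel t) (hφ.relabel _) e he).symm
  · have := h _ φ hφ (Sum.elim (Sum.elim a b) e)
    rwa [exchange_comp_sumElim ha hb hab he, iff_comm] at this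

theorem Exchangeable.symm {a b : Fin k → M} (h : Exchangeable L a b) : Exchangeable L b a :=
  ⟨h.1.symm, fun n φ hφ e he => (h.2 n φ hφ e (by rwa [union_comm])).symm⟩

theorem Exchangeable.trans {a b c : Fin k → M} (hac : Exchangeable L a c)
    (hcb : Exchangeable L c b) (ha : a.Injective) (hb : b.Injective) (hc : c.Injective)
    (hab : Disjoint (range a) (range b)) : Exchangeable L a b := by
  rw [exchangeable_iff_preservesQF ha hb hab, exchange_eq_comp ha hb hc hab hac.1 hcb.1]
  have hac' : PreservesQF L (exchange a c) := (exchangeable_iff_preservesQF ha hc hac.1).mp hac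
  exact hac'.comp (((exchangeable_iff_preservesQF hc hb hcb.1).mp hcb).comp hac')

end

theorem isKClique_union
    (M : Type u) [L.Structure M] (k : ℕ) (A B : Set (Fin k → M))
    (hA : IsKClique L k A) (hB : IsKClique L k B)
    (hAB : (A ∩ B).Nonempty)
    (hsep : ∀ a ∈ A \ B, ∀ b ∈ B \ A, ∀ i j : Fin k, a i ≠ b j) :
    IsKClique L k (A ∪ B) := by
  refine ⟨hA.1.mono subset_union_left, fun a ha => ha.elim (hA.2.1 a) (hB.2.1 a), ?_⟩
  refine pairwise_union.2 ⟨hA.2.2, hB.2.2, fun a ha b hb hab => ?_⟩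
  suffices Exchangeable L a b from ⟨this, this.symm⟩
  by_cases haB : a ∈ B
  · exact hB.2.2 a haB b hb hab
  by_cases hbA : b ∈ A
  · exact hA.2.2 a ha b hbA hab
  obtain ⟨c, hcA, hcB⟩ := hAB
  have hac : Exchangeable L a c := hA.2.2 a ha c hcA (ne_of_mem_of_not_mem hcB haB).symm
  have hcb : Exchangeable L c b := hB.2.2 c hcB b hb (ne_of_mem_of_not_mem hcA hbA)
  exact hac.trans hcb (hA.2.1 a ha) (hB.2.1 b hb) (hA.2.1 c hcA)
    (disjoint_range_iff.2 (hsep a ⟨ha, haB⟩ b ⟨hb, hbA⟩))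

end Stmt11
end

section
/- Let M be a countable structure in a finite relational language in which every atomic relation is mutually algebraic. Suppose there is an infinite set {C_i : i ∈ ω} of MA-connected components of M such that for each i, C_i properly embeds into C_{i+1}, but there is no embedding of C_{i+1} into C_i. Then there are 2^{ℵ₀} pairwise non-isomorphic countable structures bi-embeddable with M. -/
/- STATEMENT 17: Let `M` be a countable structure in a finite relational language in which
every atomic relation is mutually algebraic.  If there are MA-connected components
`{C_i : i ∈ ω}` of `M` such that each `C_i` properly embeds into `C_{i+1}` but `C_{i+1}`
does not embed into `C_i`, then `M` has 2^ℵ₀ pairwise non-isomorphic countable siblings. -/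

open FirstOrder Language Set

universe u v w

namespace Stmt17

variable (L : FirstOrder.Language.{v, w})

/-- The induced structure on a subset of a structure in a relational language. -/
instance subsetStructure [L.IsRelational] {M : Type u} [L.Structure M] (s : Set M) :
    L.Structure s where
  funMap := fun f _ => isEmptyElim f
  RelMap := fun R v => Structure.RelMap R fun i => (v i : M)

/-- Every atomic relation of `M` defines a mutually algebraic set. -/
def AtomicallyMA (M : Type u) [L.Structure M] : Prop :=
  ∀ (n : ℕ) (R : L.Relations n), ∃ K : ℕ, ∀ m : M,
    Cardinal.mk {v : Fin n → M // Structure.RelMap R v ∧ ∃ i, v i = m} ≤ K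

/-- `x` and `y` lie on a common hyperedge of `G_M` whose vertices all lie in `A`. -/
def EdgeStep {M : Type u} [L.Structure M] (A : Set M) (x y : M) : Prop :=
  ∃ (n : ℕ) (R : L.Relations n) (v : Fin n → M),
    Structure.RelMap R v ∧ (∀ i, v i ∈ A) ∧ (∃ i, v i = x) ∧ (∃ i, v i = y)

/-- `A` is an MA-connected part: a connected part of the hypergraph `G_M`. -/
def IsMAConnectedPart {M : Type u} [L.Structure M] (A : Set M) : Prop :=
  ∀ x ∈ A, ∀ y ∈ A, Relation.ReflTransGen (EdgeStep L A) x y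

/-- An MA-connected component: a maximal MA-connected part. -/
def IsMAComponent {M : Type u} [L.Structure M] (A : Set M) : Prop :=
  A.Nonempty ∧ IsMAConnectedPart L A ∧
    ∀ B : Set M, IsMAConnectedPart L B → A ⊆ B → B = A

/-- There are 2^ℵ₀ pairwise non-isomorphic countable structures bi-embeddable with `N`. -/
def HasContinuumManySiblings (N : Type u) [L.Structure N] : Prop :=
  ∃ A : Set (L.Substructure N),
    Cardinal.continuum ≤ Cardinal.mk A ∧
    (∀ S ∈ A, Countable S ∧ Nonempty (N ↪[L] S)) ∧
    A.Pairwise fun S T => IsEmpty (S ≃[L] T)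

/-!
Write `D i = C (2 * i)`. The `C i` are pairwise not bi-embeddable, and `C i` embeds into `C j`
whenever `i ≤ j`. For `Y ⊆ ℕ` let `M_Y` be `M` with every component bi-embeddable with some
`D i`, `i ∈ Y`, deleted. `M` embeds into every `M_Y`: a component bi-embeddable with some `C k`
is sent into an odd-indexed `C j` with `j ≥ k`, distinct components to distinct targets (there
are only countably many components), and every other component is sent to itself. An
isomorphism `M_Y' ≃ M_Y` sends each component into a component bi-embeddable with it; since
`D i` is a component of `M_Y'` for `i ∉ Y'` while no component of `M_Y` is bi-embeddable
with `D i` for `i ∈ Y`, the `M_Y` are pairwise non-isomorphic.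
-/

variable {L}

section Components

variable {M : Type u} {N : Type*} [L.Structure M] [L.Structure N]

lemma EdgeStep.mono {A B : Set M} (hAB : A ⊆ B) {x y : M} (h : EdgeStep L A x y) :
    EdgeStep L B x y := by
  obtain ⟨n, R, v, hR, hv, hx, hy⟩ := h
  exact ⟨n, R, v, hR, fun i => hAB (hv i), hx, hy⟩

lemma isMAConnectedPart_singleton (m : M) : IsMAConnectedPart L {m} := by
  rintro x rfl y rfl
  exact .refl

lemma isMAConnectedPart_sUnion {𝒟 : Set (Set M)} {m : M}
    (h𝒟 : ∀ D ∈ 𝒟, IsMAConnectedPart L D ∧ m ∈ D) : IsMAConnectedPart L (⋃₀ 𝒟) := by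
  have inUnion : ∀ D ∈ 𝒟, ∀ x ∈ D, ∀ y ∈ D, Relation.ReflTransGen (EdgeStep L (⋃₀ 𝒟)) x y :=
    fun D hD x hx y hy => Relation.ReflTransGen.mono
      (fun _ _ => EdgeStep.mono (subset_sUnion_of_mem hD)) _ _ ((h𝒟 D hD).1 x hx y hy)
  rintro x ⟨D, hD, hx⟩ y ⟨D', hD', hy⟩
  exact (inUnion D hD x hx m (h𝒟 D hD).2).trans (inUnion D' hD' m (h𝒟 D' hD').2 y hy)

variable (L) in
def maComponent (m : M) : Set M :=
  ⋃₀ {D | IsMAConnectedPart L D ∧ m ∈ D}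

lemma mem_maComponent_self (m : M) : m ∈ maComponent L m :=
  ⟨{m}, ⟨isMAConnectedPart_singleton m, rfl⟩, rfl⟩

lemma IsMAConnectedPart.subset_maComponent {D : Set M} (hD : IsMAConnectedPart L D) {m : M}
    (hm : m ∈ D) : D ⊆ maComponent L m :=
  subset_sUnion_of_mem ⟨hD, hm⟩

lemma isMAConnectedPart_maComponent (m : M) : IsMAConnectedPart L (maComponent L m) :=
  isMAConnectedPart_sUnion fun _ hD => hD

lemma isMAComponent_maComponent (m : M) : IsMAComponent L (maComponent L m) :=
  ⟨⟨m, mem_maComponent_self m⟩, isMAConnectedPart_maComponent m, fun _ hB hsub =>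
    (hB.subset_maComponent (hsub (mem_maComponent_self m))).antisymm hsub⟩

lemma IsMAComponent.eq_maComponent {E : Set M} (hE : IsMAComponent L E) {m : M} (hm : m ∈ E) :
    E = maComponent L m :=
  (hE.2.2 _ (isMAConnectedPart_maComponent m) (hE.2.1.subset_maComponent hm)).symm

lemma mem_maComponent_iff {x y : M} : y ∈ maComponent L x ↔ maComponent L y = maComponent L x :=
  ⟨fun h => ((isMAComponent_maComponent x).eq_maComponent h).symm,
    fun h => h ▸ mem_maComponent_self y⟩

lemma mem_maComponent_of_relMap {n : ℕ} {R : L.Relations n} {v : Fin n → M}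
    (hR : Structure.RelMap R v) (i j : Fin n) : v j ∈ maComponent L (v i) := by
  have hrange : IsMAConnectedPart L (range v) := fun _ hx _ hy =>
    .single ⟨n, R, v, hR, mem_range_self, hx, hy⟩
  exact hrange.subset_maComponent (mem_range_self i) (mem_range_self j)

variable (L) in
structure IsEmbeddingOn (f : M → N) (s : Set M) : Prop where
  injOn : s.InjOn f
  relMap_comp_iff : ∀ {n : ℕ} (R : L.Relations n) (v : Fin n → M), (∀ i, v i ∈ s) →
    (Structure.RelMap R (f ∘ v) ↔ Structure.RelMap R v)

lemma IsEmbeddingOn.mono {f : M → N} {s t : Set M} (hf : IsEmbeddingOn L f t) (hst : s ⊆ t) :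
    IsEmbeddingOn L f s :=
  ⟨hf.injOn.mono hst, fun R v hv => hf.relMap_comp_iff R v fun i => hst (hv i)⟩

lemma IsEmbeddingOn.congr {f g : M → N} {s : Set M} (hf : IsEmbeddingOn L f s)
    (hfg : EqOn f g s) : IsEmbeddingOn L g s := by
  refine ⟨hf.injOn.congr hfg, fun R v hv => ?_⟩
  have hcomp : g ∘ v = f ∘ v := funext fun i => (hfg (hv i)).symm
  rw [hcomp]
  exact hf.relMap_comp_iff R v hv

lemma IsMAConnectedPart.image {f : M → N} {s D : Set M} (hf : IsEmbeddingOn L f s)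
    (hDs : D ⊆ s) (hD : IsMAConnectedPart L D) : IsMAConnectedPart L (f '' D) := by
  have edge : ∀ x y, EdgeStep L D x y → EdgeStep L (f '' D) (f x) (f y) := by
    rintro x y ⟨n, R, v, hR, hv, ⟨i, rfl⟩, ⟨j, rfl⟩⟩
    exact ⟨n, R, f ∘ v, (hf.relMap_comp_iff R v fun k => hDs (hv k)).2 hR,
      fun k => mem_image_of_mem f (hv k), ⟨i, rfl⟩, ⟨j, rfl⟩⟩
  rintro _ ⟨x, hx, rfl⟩ _ ⟨y, hy, rfl⟩
  exact (hD x hx y hy).lift f edge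

lemma isEmbeddingOn_univ_of_components {f : M → M}
    (hf : ∀ m, IsEmbeddingOn L f (maComponent L m))
    (hsep : ∀ x y, maComponent L (f x) = maComponent L (f y) → maComponent L x = maComponent L y) :
    IsEmbeddingOn L f univ := by
  refine ⟨fun x _ y _ hxy => ?_, fun {n} R v _ => ?_⟩
  · have hy : y ∈ maComponent L x := mem_maComponent_iff.2 (hsep y x (by rw [hxy]))
    exact (hf x).injOn (mem_maComponent_self x) hy hxy
  rcases isEmpty_or_nonempty (Fin n) with hn | ⟨⟨i⟩⟩
  · rw [Subsingleton.elim (f ∘ v) v]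
  have onComponent := (hf (v i)).relMap_comp_iff R v
  refine ⟨fun h => (onComponent fun j => ?_).1 h, fun h => (onComponent
    (mem_maComponent_of_relMap h i)).2 h⟩
  exact mem_maComponent_iff.2 (hsep _ _ (mem_maComponent_iff.1 (mem_maComponent_of_relMap h i j)))

end Components

section Relational

variable [L.IsRelational] {M : Type u} [L.Structure M]

noncomputable def extendMap {s t : Set M} (e : s ↪[L] t) : M → M :=
  Function.extend Subtype.val (fun x => (e x : M)) id

lemma extendMap_coe {s t : Set M} (e : s ↪[L] t) (x : s) : extendMap e x = e x :=
  Subtype.val_injective.extend_apply _ _ x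

lemma mapsTo_extendMap {s t : Set M} (e : s ↪[L] t) : MapsTo (extendMap e) s t := fun x hx => by
  rw [extendMap_coe e ⟨x, hx⟩]
  exact (e ⟨x, hx⟩).2

lemma isEmbeddingOn_extendMap {s t : Set M} (e : s ↪[L] t) : IsEmbeddingOn L (extendMap e) s := by
  refine ⟨fun x hx y hy hxy => ?_, fun R v hv => ?_⟩
  · rw [extendMap_coe e ⟨x, hx⟩, extendMap_coe e ⟨y, hy⟩] at hxy
    exact congrArg Subtype.val (e.injective (Subtype.ext hxy))
  · have hcomp : extendMap e ∘ v = fun i => (e ⟨v i, hv i⟩ : M) :=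
      funext fun i => extendMap_coe e ⟨v i, hv i⟩
    rw [hcomp]
    exact e.map_rel R fun i => ⟨v i, hv i⟩

lemma extendMap_symm_extendMap {s t : Set M} (φ : s ≃[L] t) {x : M} (hx : x ∈ s) :
    extendMap φ.symm.toEmbedding (extendMap φ.toEmbedding x) = x := by
  rw [extendMap_coe φ.toEmbedding ⟨x, hx⟩, extendMap_coe φ.symm.toEmbedding]
  exact congrArg Subtype.val (φ.symm_apply_apply ⟨x, hx⟩)

def IsEmbeddingOn.toEmbedding {f : M → M} {s t : Set M} (hf : IsEmbeddingOn L f s)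
    (hst : MapsTo f s t) : s ↪[L] t where
  toFun x := ⟨f x, hst x.2⟩
  inj' x y h := Subtype.ext (hf.injOn x.2 y.2 (congrArg Subtype.val h))
  map_fun' f := isEmptyElim f
  map_rel' R v := hf.relMap_comp_iff R (fun i => v i) fun i => (v i).2

lemma nonempty_embedding_iff {s t : Set M} :
    Nonempty (s ↪[L] t) ↔ ∃ f : M → M, MapsTo f s t ∧ IsEmbeddingOn L f s :=
  ⟨fun ⟨e⟩ => ⟨extendMap e, mapsTo_extendMap e, isEmbeddingOn_extendMap e⟩,
    fun ⟨_, hst, hf⟩ => ⟨hf.toEmbedding hst⟩⟩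

variable (L) in
def Siblings (A B : Set M) : Prop :=
  Nonempty (A ↪[L] B) ∧ Nonempty (B ↪[L] A)

lemma Siblings.refl (A : Set M) : Siblings L A A :=
  ⟨⟨Embedding.refl L A⟩, ⟨Embedding.refl L A⟩⟩

lemma Siblings.symm {A B : Set M} (h : Siblings L A B) : Siblings L B A :=
  And.symm h

def closureEquivOfIsRelational (s : Set M) : Substructure.closure L s ≃[L] s where
  toFun x := ⟨x, (Substructure.mem_closure_iff_of_isRelational L s x).1 x.2⟩
  invFun x := ⟨x, (Substructure.mem_closure_iff_of_isRelational L s x).2 x.2⟩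
  left_inv _ := rfl
  right_inv _ := rfl
  map_fun' f := isEmptyElim f
  map_rel' _ _ := Iff.rfl

lemma exists_siblings_of_equiv {S T : Set M} (hS : ∀ x ∈ S, maComponent L x ⊆ S)
    (hT : ∀ y ∈ T, maComponent L y ⊆ T) (φ : S ≃[L] T) {x : M} (hx : x ∈ S) :
    ∃ y ∈ T, Siblings L (maComponent L x) (maComponent L y) := by
  set f := extendMap φ.toEmbedding
  set g := extendMap φ.symm.toEmbedding
  have hfx : f x ∈ T := mapsTo_extendMap φ.toEmbedding hx
  have hgfx : g (f x) = x := extendMap_symm_extendMap φ hx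
  have hf : IsEmbeddingOn L f (maComponent L x) :=
    (isEmbeddingOn_extendMap φ.toEmbedding).mono (hS x hx)
  have hg : IsEmbeddingOn L g (maComponent L (f x)) :=
    (isEmbeddingOn_extendMap φ.symm.toEmbedding).mono (hT _ hfx)
  have hfD : MapsTo f (maComponent L x) (maComponent L (f x)) := mapsTo_iff_image_subset.2 <|
    ((isMAConnectedPart_maComponent x).image hf subset_rfl).subset_maComponent
      (mem_image_of_mem f (mem_maComponent_self x))
  have hgE : MapsTo g (maComponent L (f x)) (maComponent L x) := by
    have h := ((isMAConnectedPart_maComponent (f x)).image hg subset_rfl).subset_maComponent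
      (mem_image_of_mem g (mem_maComponent_self (f x)))
    rwa [hgfx, ← mapsTo_iff_image_subset] at h
  exact ⟨f x, hfx, ⟨hf.toEmbedding hfD⟩, ⟨hg.toEmbedding hgE⟩⟩

end Relational

section Chain

variable {N : ℕ → Type*} [∀ i, L.Structure (N i)]

lemma nonempty_embedding_of_le (hstep : ∀ i, Nonempty (N i ↪[L] N (i + 1))) {a b : ℕ}
    (hab : a ≤ b) : Nonempty (N a ↪[L] N b) := by
  induction b, hab using Nat.le_induction with
  | base => exact ⟨Embedding.refl L _⟩
  | succ b _ ih =>
    obtain ⟨e⟩ := ih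
    obtain ⟨e'⟩ := hstep b
    exact ⟨e'.comp e⟩

lemma eq_of_nonempty_embeddings (hstep : ∀ i, Nonempty (N i ↪[L] N (i + 1)))
    (hback : ∀ i, IsEmpty (N (i + 1) ↪[L] N i)) {a b : ℕ} (hab : Nonempty (N a ↪[L] N b))
    (hba : Nonempty (N b ↪[L] N a)) : a = b := by
  have noBack : ∀ a b, a < b → Nonempty (N b ↪[L] N a) → False := fun a _ hlt ⟨e⟩ =>
    let ⟨e'⟩ := nonempty_embedding_of_le hstep hlt
    (hback a).false (e.comp e')
  by_contra hne
  rcases Nat.lt_or_gt_of_ne hne with h | h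
  exacts [noBack _ _ h hba, noBack _ _ h hab]

end Chain

section Gluing

variable [L.IsRelational] {M : Type u} [L.Structure M]

lemma exists_selfEmbedding_of_componentwise (ψ : Set M → Set M)
    (hψ : ∀ m, IsMAComponent L (ψ (maComponent L m)))
    (hemb : ∀ m, Nonempty (maComponent L m ↪[L] ψ (maComponent L m)))
    (hinj : InjOn ψ (range (maComponent L))) :
    ∃ f : M ↪[L] M, ∀ m, maComponent L (f m) = ψ (maComponent L m) := by
  have hpieces : ∀ E, ∃ g : M → M,
      ∀ m, maComponent L m = E → MapsTo g E (ψ E) ∧ IsEmbeddingOn L g E := by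
    intro E
    by_cases hE : ∃ m, maComponent L m = E
    · obtain ⟨m, rfl⟩ := hE
      obtain ⟨g, hg⟩ := nonempty_embedding_iff.1 (hemb m)
      exact ⟨g, fun _ _ => hg⟩
    · exact ⟨id, fun m hm => (hE ⟨m, hm⟩).elim⟩
  choose g hg using hpieces
  set f := fun m => g (maComponent L m) m
  have hfg : ∀ m, EqOn (g (maComponent L m)) f (maComponent L m) := fun m x hx => by
    simp only [f, mem_maComponent_iff.1 hx]
  have hcomp : ∀ m, maComponent L (f m) = ψ (maComponent L m) := fun m =>
    ((hψ m).eq_maComponent ((hg _ m rfl).1 (mem_maComponent_self m))).symm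
  have hf : IsEmbeddingOn L f univ := isEmbeddingOn_univ_of_components
    (fun m => (hg _ m rfl).2.congr (hfg m))
    (fun x y h => hinj (mem_range_self x) (mem_range_self y) (by rwa [hcomp, hcomp] at h))
  exact ⟨⟨⟨f, injOn_univ.1 hf.injOn⟩, fun f => isEmptyElim f,
    fun R v => hf.relMap_comp_iff R v fun _ => mem_univ _⟩, hcomp⟩

end Gluing

section Shift

variable [L.IsRelational] {M : Type u} [L.Structure M] {C : ℕ → Set M}

variable (L C) in
open Classical in
/-- Only odd-indexed targets, so that they survive the deletion of the `C (2 * i)`. -/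
noncomputable def componentShift (ι : Set M → ℕ) (E : Set M) : Set M :=
  if h : ∃ k, Siblings L E (C k) then C (2 * Nat.pair (ι E) h.choose + 1) else E

lemma isMAComponent_componentShift (hC : ∀ i, IsMAComponent L (C i)) {ι : Set M → ℕ}
    {E : Set M} (hE : IsMAComponent L E) : IsMAComponent L (componentShift L C ι E) := by
  unfold componentShift
  split_ifs
  exacts [hC _, hE]

lemma nonempty_embedding_componentShift (hle : ∀ a b, a ≤ b → Nonempty (C a ↪[L] C b))
    (ι : Set M → ℕ) (E : Set M) : Nonempty (E ↪[L] componentShift L C ι E) := by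
  by_cases h : ∃ k, Siblings L E (C k)
  · rw [componentShift, dif_pos h]
    obtain ⟨e⟩ := h.choose_spec.1
    obtain ⟨e'⟩ := hle h.choose (2 * Nat.pair (ι E) h.choose + 1) (by have := Nat.right_le_pair (ι E) h.choose; omega)
    exact ⟨e'.comp e⟩
  · rw [componentShift, dif_neg h]
    exact ⟨Embedding.refl L E⟩

lemma componentShift_injOn (hC : ∀ a b, Siblings L (C a) (C b) → a = b) {ι : Set M → ℕ}
    (hι : InjOn ι (range (maComponent L))) :
    InjOn (componentShift L C ι) (range (maComponent L)) := by
  intro E hE E' hE' h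
  unfold componentShift at h
  split_ifs at h with h₁ h₂ h₂
  · have hidx : 2 * Nat.pair (ι E) h₁.choose + 1 = 2 * Nat.pair (ι E') h₂.choose + 1 :=
      hC _ _ (by rw [h]; exact Siblings.refl _)
    have hpair : Nat.pair (ι E) h₁.choose = Nat.pair (ι E') h₂.choose := by omega
    exact hι hE hE' (Nat.pair_eq_pair.1 hpair).1
  · exact (h₂ ⟨_, by rw [← h]; exact Siblings.refl _⟩).elim
  · exact (h₁ ⟨_, by rw [h]; exact Siblings.refl _⟩).elim
  · exact h

lemma not_siblings_componentShift (hC : ∀ a b, Siblings L (C a) (C b) → a = b)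
    (ι : Set M → ℕ) (E : Set M) (i : ℕ) : ¬ Siblings L (componentShift L C ι E) (C (2 * i)) := by
  unfold componentShift
  split_ifs with h
  · intro hs
    have := hC _ _ hs
    omega
  · exact fun hs => h ⟨_, hs⟩

end Shift

section Pruning

variable [L.IsRelational] {M : Type u} [L.Structure M]

variable (L) in
def withoutSiblingsOf (D : ℕ → Set M) (Y : Set ℕ) : Set M :=
  {x | ∀ i ∈ Y, ¬ Siblings L (maComponent L x) (D i)}

lemma maComponent_subset_withoutSiblingsOf {D : ℕ → Set M} {Y : Set ℕ} {x : M}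
    (hx : x ∈ withoutSiblingsOf L D Y) : maComponent L x ⊆ withoutSiblingsOf L D Y := by
  intro y hy
  show ∀ i ∈ Y, ¬ Siblings L (maComponent L y) (D i)
  rwa [mem_maComponent_iff.1 hy]

lemma isEmpty_equiv_withoutSiblingsOf {D : ℕ → Set M} (hD : ∀ i, IsMAComponent L (D i))
    (hDsib : ∀ i j, Siblings L (D i) (D j) → i = j) {Y Y' : Set ℕ} {i : ℕ} (hi : i ∈ Y)
    (hi' : i ∉ Y') : IsEmpty (withoutSiblingsOf L D Y' ≃[L] withoutSiblingsOf L D Y) := by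
  refine ⟨fun φ => ?_⟩
  obtain ⟨x, hx⟩ := (hD i).1
  have hxD : maComponent L x = D i := ((hD i).eq_maComponent hx).symm
  have hxY' : x ∈ withoutSiblingsOf L D Y' := fun j hj hs =>
    hi' (hDsib i j (hxD ▸ hs) ▸ hj)
  obtain ⟨y, hy, hsib⟩ := exists_siblings_of_equiv (fun _ => maComponent_subset_withoutSiblingsOf)
    (fun _ => maComponent_subset_withoutSiblingsOf) φ hxY'
  exact hy i hi (hxD ▸ hsib.symm)

theorem hasContinuumManySiblings_of_selfEmbedding [Countable M] {D : ℕ → Set M}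
    (hD : ∀ i, IsMAComponent L (D i)) (hDsib : ∀ i j, Siblings L (D i) (D j) → i = j)
    (f : M ↪[L] M) (hf : ∀ m i, ¬ Siblings L (maComponent L (f m)) (D i)) :
    HasContinuumManySiblings L M := by
  set S : Set ℕ → L.Substructure M := fun Y => Substructure.closure L (withoutSiblingsOf L D Y)
  have hnoIso : ∀ Y Y', Y ≠ Y' → IsEmpty (S Y ≃[L] S Y') := by
    intro Y Y' hne
    obtain ⟨i, hi⟩ : ∃ i, ¬ (i ∈ Y ↔ i ∈ Y') := by
      contrapose! hne
      exact Set.ext hne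
    refine ⟨fun φ => ?_⟩
    have φ' := (closureEquivOfIsRelational _).comp (φ.comp (closureEquivOfIsRelational _).symm)
    by_cases hY : i ∈ Y
    · exact (isEmpty_equiv_withoutSiblingsOf hD hDsib hY (by tauto)).false φ'.symm
    · exact (isEmpty_equiv_withoutSiblingsOf hD hDsib (by tauto) hY).false φ'
  have hSinj : Function.Injective S := fun Y Y' h =>
    by_contra fun hne => (hnoIso Y Y' hne).false (h ▸ Language.Equiv.refl L _)
  refine ⟨range S, ?_, ?_, ?_⟩
  · have h := Cardinal.mk_range_eq_of_injective hSinj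
    rw [Cardinal.mk_set, Cardinal.mk_nat, Cardinal.two_power_aleph0] at h
    rw [← Cardinal.continuum_le_lift.{u, 0}, h, Cardinal.lift_continuum]
  · rintro _ ⟨Y, rfl⟩
    exact ⟨inferInstance, ⟨Embedding.codRestrict (S Y) f fun m =>
      (Substructure.mem_closure_iff_of_isRelational L _ _).2 fun i _ => hf m i⟩⟩
  · rintro _ ⟨Y, rfl⟩ _ ⟨Y', rfl⟩ hne
    exact hnoIso Y Y' fun h => hne (congrArg S h)

end Pruning

theorem increasing_components_continuum_siblings_general
    [L.IsRelational]
    (M : Type u) [L.Structure M] [Countable M]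
    (C : ℕ → Set M)
    (hcomp : ∀ i, IsMAComponent L (C i))
    (hemb : ∀ i, ∃ f : (C i) ↪[L] (C (i + 1)), ¬ Function.Surjective (⇑f))
    (hnoemb : ∀ i, IsEmpty ((C (i + 1)) ↪[L] (C i))) :
    HasContinuumManySiblings L M := by
  have hstep : ∀ i, Nonempty (C i ↪[L] C (i + 1)) := fun i =>
    let ⟨f, _⟩ := hemb i
    ⟨f⟩
  have hCsib : ∀ a b, Siblings L (C a) (C b) → a = b := fun _ _ h =>
    eq_of_nonempty_embeddings (N := fun i => C i) hstep hnoemb h.1 h.2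
  obtain ⟨ι, hι⟩ := countable_iff_exists_injOn.1 (countable_range (maComponent L (M := M)))
  obtain ⟨f, hf⟩ := exists_selfEmbedding_of_componentwise (componentShift L C ι)
    (fun m => isMAComponent_componentShift hcomp (isMAComponent_maComponent m))
    (fun m => nonempty_embedding_componentShift (fun _ _ => nonempty_embedding_of_le hstep) ι _)
    (componentShift_injOn hCsib hι)
  refine hasContinuumManySiblings_of_selfEmbedding (D := fun i => C (2 * i)) (fun i => hcomp _)
    (fun i j h => by have := hCsib _ _ h; omega) f fun m i => ?_
  rw [hf m]
  exact not_siblings_componentShift hCsib ι _ i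

/-- A strictly increasing (under embeddability) chain of MA-connected components yields
2^ℵ₀ siblings. -/
theorem increasing_components_continuum_siblings
    [L.IsRelational] [Finite (Σ n, L.Relations n)]
    (M : Type u) [L.Structure M] [Countable M]
    (hma : AtomicallyMA L M)
    (C : ℕ → Set M) (hCinj : Function.Injective C)
    (hcomp : ∀ i, IsMAComponent L (C i))
    (hemb : ∀ i, ∃ f : (C i) ↪[L] (C (i + 1)), ¬ Function.Surjective (⇑f))
    (hnoemb : ∀ i, IsEmpty ((C (i + 1)) ↪[L] (C i))) :
    HasContinuumManySiblings L M :=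
  increasing_components_continuum_siblings_general M C hcomp hemb hnoemb

end Stmt17
end

section
/- Let M be a countable structure in a finite relational language in which every atomic relation is mutually algebraic. If M contains infinitely many pairwise isomorphic infinite MA-connected components, then there are 2^{ℵ₀} pairwise non-isomorphic countable structures bi-embeddable with M. -/
/- STATEMENT 18: Let `M` be a countable structure in a finite relational language in which
every atomic relation is mutually algebraic.  If `M` contains infinitely many pairwise
isomorphic infinite MA-connected components, then `M` has 2^ℵ₀ pairwise non-isomorphic
countable siblings. -/

open FirstOrder Language Set

universe u v w

namespace Stmt18

variable (L : FirstOrder.Language.{v, w})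

/-- The induced structure on a subset of a structure in a relational language. -/
instance subsetStructure [L.IsRelational] {M : Type u} [L.Structure M] (s : Set M) :
    L.Structure s where
  funMap := fun f _ => isEmptyElim f
  RelMap := fun R v => Structure.RelMap R fun i => (v i : M)

/-- Every atomic relation of `M` defines a mutually algebraic set. -/
def AtomicallyMA (M : Type u) [L.Structure M] : Prop :=
  ∀ (n : ℕ) (R : L.Relations n), ∃ K : ℕ, ∀ m : M,
    Cardinal.mk {v : Fin n → M // Structure.RelMap R v ∧ ∃ i, v i = m} ≤ K

/-- `x` and `y` lie on a common hyperedge of `G_M` whose vertices all lie in `A`. -/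
def EdgeStep {M : Type u} [L.Structure M] (A : Set M) (x y : M) : Prop :=
  ∃ (n : ℕ) (R : L.Relations n) (v : Fin n → M),
    Structure.RelMap R v ∧ (∀ i, v i ∈ A) ∧ (∃ i, v i = x) ∧ (∃ i, v i = y)

/-- `A` is an MA-connected part: a connected part of the hypergraph `G_M`. -/
def IsMAConnectedPart {M : Type u} [L.Structure M] (A : Set M) : Prop :=
  ∀ x ∈ A, ∀ y ∈ A, Relation.ReflTransGen (EdgeStep L A) x y

/-- An MA-connected component: a maximal MA-connected part. -/
def IsMAComponent {M : Type u} [L.Structure M] (A : Set M) : Prop :=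
  A.Nonempty ∧ IsMAConnectedPart L A ∧
    ∀ B : Set M, IsMAConnectedPart L B → A ⊆ B → B = A

/-- There are 2^ℵ₀ pairwise non-isomorphic countable structures bi-embeddable with `N`. -/
def HasContinuumManySiblings (N : Type u) [L.Structure N] : Prop :=
  ∃ A : Set (L.Substructure N),
    Cardinal.continuum ≤ Cardinal.mk A ∧
    (∀ S ∈ A, Countable S ∧ Nonempty (N ↪[L] S)) ∧
    A.Pairwise fun S T => IsEmpty (S ≃[L] T)

section Helpers

variable {L}
variable {M : Type u} [L.Structure M]

/-- Connectivity within a set. -/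
def Conn (A : Set M) : M → M → Prop := Relation.ReflTransGen (EdgeStep L A)

lemma EdgeStep.symm' {A : Set M} {x y : M} (h : EdgeStep L A x y) : EdgeStep L A y x := by
  obtain ⟨n, R, v, h1, h2, h3, h4⟩ := h
  exact ⟨n, R, v, h1, h2, h4, h3⟩

lemma edgeStep_symm (A : Set M) : Symmetric (EdgeStep L A) := fun _ _ h => h.symm'

lemma EdgeStep.mono {A B : Set M} (hAB : A ⊆ B) {x y : M} (h : EdgeStep L A x y) :
    EdgeStep L B x y := by
  obtain ⟨n, R, v, h1, h2, h3, h4⟩ := h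
  exact ⟨n, R, v, h1, fun i => hAB (h2 i), h3, h4⟩

lemma EdgeStep.mem_right {A : Set M} {x y : M} (h : EdgeStep L A x y) : y ∈ A := by
  obtain ⟨n, R, v, _, h2, _, i, hi⟩ := h
  exact hi ▸ h2 i

lemma Conn.symm {A : Set M} {x y : M} (h : Conn (L := L) A x y) : Conn (L := L) A y x :=
  haveI : Std.Symm (EdgeStep L A) := ⟨fun _ _ h' => edgeStep_symm A h'⟩
  Relation.ReflTransGen.symmetric.symm _ _ h

lemma Conn.mono {A B : Set M} (hAB : A ⊆ B) {x y : M} (h : Conn (L := L) A x y) :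
    Conn (L := L) B x y :=
  Relation.ReflTransGen.mono (fun _ _ (he : EdgeStep L A _ _) => he.mono hAB) _ _ h

lemma Conn.trans {A : Set M} {x y z : M} (h : Conn (L := L) A x y)
    (h' : Conn (L := L) A y z) : Conn (L := L) A x z :=
  Relation.ReflTransGen.trans h h'

/-- The connected component of `x` in the hypergraph restricted to `W`. -/
def Comp (W : Set M) (x : M) : Set M := {y | Conn (L := L) W x y}

lemma mem_comp_self (W : Set M) (x : M) : x ∈ Comp (L := L) W x :=
  Relation.ReflTransGen.refl

lemma comp_eq_of_mem {W : Set M} {x y : M} (h : y ∈ Comp (L := L) W x) :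
    Comp (L := L) W x = Comp (L := L) W y := by
  ext z
  exact ⟨fun hz => Conn.trans (Conn.symm h) hz, fun hz => Conn.trans h hz⟩

lemma comp_subset_of_mem {W : Set M} {x : M} (hx : x ∈ W) : Comp (L := L) W x ⊆ W := by
  intro y hy
  induction hy with
  | refl => exact hx
  | tail _ he _ => exact he.mem_right

/-- If `Q` is closed under edge steps within `W`, the component of `x ∈ Q` is inside `Q`. -/
lemma comp_subset_closed {W Q : Set M} {x : M} (hx : x ∈ Q)
    (hcl : ∀ a ∈ Q, ∀ b, EdgeStep L W a b → b ∈ Q) : Comp (L := L) W x ⊆ Q := by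
  intro y hy
  induction hy with
  | refl => exact hx
  | tail _ he ih => exact hcl _ ih _ he

/-- Edge absorption: any edge touching the component of `x` lies inside it. -/
lemma edge_mem_comp {W : Set M} {x : M} {n : ℕ} {R : L.Relations n} {v : Fin n → M}
    (hR : Structure.RelMap R v) (hW : ∀ i, v i ∈ W) {j : Fin n}
    (hj : v j ∈ Comp (L := L) W x) (i : Fin n) : v i ∈ Comp (L := L) W x :=
  Conn.trans hj (Relation.ReflTransGen.single ⟨n, R, v, hR, hW, ⟨j, rfl⟩, ⟨i, rfl⟩⟩)

/-- Components are internally connected. -/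
lemma comp_conn {W : Set M} {x : M} {y : M} (hy : y ∈ Comp (L := L) W x) :
    Conn (L := L) (Comp (L := L) W x) x y := by
  induction hy with
  | refl => exact Relation.ReflTransGen.refl
  | @tail b c hb he ih =>
      obtain ⟨n, R, v, h1, h2, h3, h4⟩ := he
      obtain ⟨j, hjb⟩ := h3
      have hvj : v j ∈ Comp (L := L) W x := by rw [hjb]; exact hb
      exact ih.tail ⟨n, R, v, h1, fun i => edge_mem_comp h1 h2 hvj i, ⟨j, hjb⟩, h4⟩

lemma comp_isConnectedPart (W : Set M) (x : M) :
    IsMAConnectedPart L (Comp (L := L) W x) := by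
  intro a ha b hb
  exact Conn.trans (Conn.symm (comp_conn ha)) (comp_conn hb)

/-- A maximal connected part containing `x` equals `Comp univ x`. -/
lemma IsMAComponent.eq_comp {A : Set M} (hA : IsMAComponent L A) {x : M} (hx : x ∈ A) :
    A = Comp (L := L) univ x := by
  obtain ⟨-, hconn, hmax⟩ := hA
  have hsub : A ⊆ Comp (L := L) univ x := fun y hy =>
    Conn.mono (subset_univ A) (hconn x hx y hy)
  exact (hmax _ (comp_isConnectedPart univ x) hsub).symm

lemma comp_mono {W W' : Set M} (h : W ⊆ W') (x : M) :
    Comp (L := L) W x ⊆ Comp (L := L) W' x := fun _ hy => Conn.mono h hy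


section Balls

variable (L) in
/-- The set of points lying on a common hyperedge with `m`. -/
def Edges (m : M) : Set M :=
  {x | ∃ (n : ℕ) (R : L.Relations n) (v : Fin n → M),
    Structure.RelMap R v ∧ (∃ i, v i = m) ∧ ∃ i, v i = x}

lemma mem_edges {m : M} {n : ℕ} {R : L.Relations n} {v : Fin n → M}
    (hR : Structure.RelMap R v) {j : Fin n} (hj : v j = m) (i : Fin n) :
    v i ∈ Edges L m :=
  ⟨n, R, v, hR, ⟨j, hj⟩, ⟨i, rfl⟩⟩

lemma edges_finite [Finite (Σ n, L.Relations n)] (hma : AtomicallyMA L M) (m : M) :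
    (Edges L m).Finite := by
  have hsub : Edges L m ⊆
      ⋃ (p : Σ n, L.Relations n),
        ⋃ v ∈ {v : Fin p.1 → M | Structure.RelMap p.2 v ∧ ∃ i, v i = m}, Set.range v := by
    rintro x ⟨n, R, v, h1, h2, i, rfl⟩
    exact Set.mem_iUnion.2 ⟨⟨n, R⟩, Set.mem_biUnion ⟨h1, h2⟩ ⟨i, rfl⟩⟩
  refine Set.Finite.subset (Set.finite_iUnion fun p => ?_) hsub
  refine Set.Finite.biUnion (Set.finite_coe_iff.1 ?_) fun v _ => Set.finite_range v
  obtain ⟨K, hK⟩ := hma p.1 p.2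
  rw [← Cardinal.lt_aleph0_iff_finite]
  exact lt_of_le_of_lt (hK m) (Cardinal.nat_lt_aleph0 K)

variable (L) in
/-- Balls around `x` in the hypergraph. -/
def ball (x : M) : ℕ → Set M
  | 0 => {x}
  | r + 1 => ball x r ∪ ⋃ m ∈ ball x r, Edges L m

lemma ball_subset_succ (x : M) (r : ℕ) : ball L x r ⊆ ball L x (r + 1) :=
  Set.subset_union_left

lemma ball_mono (x : M) {r s : ℕ} (h : r ≤ s) : ball L x r ⊆ ball L x s := by
  induction h with
  | refl => exact le_refl _
  | step _ ih => exact ih.trans (ball_subset_succ x _)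

lemma mem_ball_self (x : M) (r : ℕ) : x ∈ ball L x r :=
  ball_mono x (Nat.zero_le r) rfl

lemma ball_finite [Finite (Σ n, L.Relations n)] (hma : AtomicallyMA L M) (x : M) (r : ℕ) :
    (ball L x r).Finite := by
  induction r with
  | zero => exact Set.finite_singleton x
  | succ r ih => exact ih.union (ih.biUnion fun m _ => edges_finite hma m)

lemma ball_conn (x : M) (r : ℕ) : ∀ y ∈ ball L x r, Conn (L := L) (ball L x r) x y := by
  induction r with
  | zero => rintro y rfl; exact Relation.ReflTransGen.refl
  | succ r ih =>
      rintro y (hy | hy)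
      · exact Conn.mono (ball_subset_succ x r) (ih y hy)
      · obtain ⟨m, hm, hym⟩ := Set.mem_iUnion₂.1 hy
        obtain ⟨n, R, v, h1, ⟨j, hj⟩, ⟨i, hi⟩⟩ := hym
        have hconn : Conn (L := L) (ball L x (r + 1)) x m :=
          Conn.mono (ball_subset_succ x r) (ih m hm)
        refine hconn.tail ⟨n, R, v, h1, fun i' => ?_, ⟨j, hj⟩, ⟨i, hi⟩⟩
        exact Set.subset_union_right (Set.mem_biUnion hm (mem_edges h1 hj i'))

lemma ball_subset_comp (x : M) (r : ℕ) : ball L x r ⊆ Comp (L := L) univ x := by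
  induction r with
  | zero => rintro y rfl; exact mem_comp_self _ _
  | succ r ih =>
      rintro y (hy | hy)
      · exact ih hy
      · obtain ⟨m, hm, hym⟩ := Set.mem_iUnion₂.1 hy
        obtain ⟨n, R, v, h1, ⟨j, hj⟩, ⟨i, hi⟩⟩ := hym
        have hmC : v j ∈ Comp (L := L) univ x := hj ▸ ih hm
        exact hi ▸ edge_mem_comp h1 (fun _ => Set.mem_univ _) hmC i

lemma comp_subset_iUnion_ball (x : M) : Comp (L := L) univ x ⊆ ⋃ r, ball L x r := by
  refine comp_subset_closed (Set.mem_iUnion.2 ⟨0, rfl⟩) ?_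
  rintro a ha b hab
  obtain ⟨r, hr⟩ := Set.mem_iUnion.1 ha
  obtain ⟨n, R, v, h1, _, ⟨j, hj⟩, ⟨i, hi⟩⟩ := hab
  exact Set.mem_iUnion.2 ⟨r + 1,
    Set.subset_union_right (Set.mem_biUnion hr (hi ▸ mem_edges h1 hj i))⟩

lemma exists_big_ball [Finite (Σ n, L.Relations n)] (hma : AtomicallyMA L M) {x : M}
    (hinf : (Comp (L := L) univ x).Infinite) (k : ℕ) :
    ∃ r, k ≤ (ball L x r).ncard := by
  obtain ⟨F, hFsub, hFcard⟩ := hinf.exists_subset_card_eq k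
  have hFballs : ∀ y ∈ (F : Set M), ∃ r, y ∈ ball L x r := fun y hy =>
    Set.mem_iUnion.1 (comp_subset_iUnion_ball x (hFsub hy))
  choose f hf using hFballs
  set g : {y // y ∈ F} → ℕ := fun y => f y.1 (Finset.mem_coe.2 y.2) with hg
  set r := F.attach.sup g with hrdef
  refine ⟨r, ?_⟩
  have hFsubball : (F : Set M) ⊆ ball L x r := by
    intro y hy
    have h1 : f y hy ≤ r := by
      have := Finset.le_sup (f := g) (Finset.mem_attach F ⟨y, Finset.mem_coe.1 hy⟩)
      simpa [hg] using this
    exact ball_mono x h1 (hf y hy)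
  calc k = (F : Set M).ncard := by rw [Set.ncard_coe_finset, hFcard]
    _ ≤ (ball L x r).ncard :=
        Set.ncard_le_ncard hFsubball (ball_finite hma x r)

/-- Final packaged existence of big finite connected sets. -/
lemma exists_conn_finite_subset [Finite (Σ n, L.Relations n)] (hma : AtomicallyMA L M)
    (x : M) (hinf : (Comp (L := L) univ x).Infinite) (k : ℕ) :
    ∃ B : Set M, B ⊆ Comp (L := L) univ x ∧ B.Finite ∧ B.Nonempty ∧
      (∀ y ∈ B, ∀ z ∈ B, Conn (L := L) B y z) ∧ k ≤ B.ncard := by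
  obtain ⟨r, hr⟩ := exists_big_ball hma hinf k
  refine ⟨ball L x r, ball_subset_comp x r, ball_finite hma x r, ⟨x, mem_ball_self x r⟩,
    fun y hy z hz => (Conn.symm (ball_conn x r y hy)).trans (ball_conn x r z hz), hr⟩

end Balls


section Transport

set_option linter.unusedSectionVars false

variable [L.IsRelational]

/-- A function behaving like an `L`-embedding from `P` into `Q`. -/
def GoodMap (f : M → M) (P Q : Set M) : Prop :=
  (∀ z ∈ P, f z ∈ Q) ∧ Set.InjOn f P ∧
    ∀ (n : ℕ) (R : L.Relations n) (v : Fin n → M), (∀ i, v i ∈ P) →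
      (Structure.RelMap R (fun i => f (v i)) ↔ Structure.RelMap R v)

lemma goodMap_of_embedding {P Q : Set M} (e : (P : Set M) ↪[L] (Q : Set M)) {f : M → M}
    (hfeq : ∀ z (hz : z ∈ P), f z = (e ⟨z, hz⟩ : M)) :
    GoodMap (L := L) f P Q := by
  refine ⟨fun z hz => ?_, fun a ha b hb hab => ?_, fun n R v hv => ?_⟩
  · rw [hfeq z hz]; exact (e ⟨z, hz⟩).2
  · rw [hfeq a ha, hfeq b hb] at hab
    exact congrArg Subtype.val (e.injective (Subtype.ext hab))
  · have hw : (fun i => f (v i)) = fun i => ((e ⟨v i, hv i⟩ : (Q : Set M)) : M) :=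
      funext fun i => hfeq _ _
    rw [hw]
    exact e.map_rel' R fun i => ⟨v i, hv i⟩

/-- The inclusion of a subset as an `L`-embedding. -/
def inclusionEmb {B A : Set M} (h : B ⊆ A) : (B : Set M) ↪[L] (A : Set M) where
  toFun := fun b => ⟨b.1, h b.2⟩
  inj' := fun a b hab => Subtype.ext (by simpa using congrArg Subtype.val hab)
  map_fun' := fun f => isEmptyElim f
  map_rel' := fun R x => Iff.rfl

lemma GoodMap.edgeStep {f : M → M} {P Q : Set M} (hf : GoodMap (L := L) f P Q)
    {a b : M} (h : EdgeStep L P a b) : EdgeStep L Q (f a) (f b) := by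
  obtain ⟨n, R, v, h1, h2, ⟨i, hi⟩, ⟨j, hj⟩⟩ := h
  exact ⟨n, R, fun i => f (v i), (hf.2.2 n R v h2).2 h1, fun i => hf.1 _ (h2 i),
    ⟨i, congrArg f hi⟩, ⟨j, congrArg f hj⟩⟩

lemma GoodMap.conn {f : M → M} {P Q : Set M} (hf : GoodMap (L := L) f P Q)
    {a b : M} (h : Conn (L := L) P a b) : Conn (L := L) Q (f a) (f b) :=
  Relation.ReflTransGen.lift f (fun _ _ (he : EdgeStep L P _ _) => hf.edgeStep he) _ _ h

/-- A pair of mutually inverse good maps transports components. -/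
lemma comp_image_eq {f g : M → M} {P Q : Set M} (hf : GoodMap (L := L) f P Q)
    (hg : GoodMap (L := L) g Q P) (hgf : ∀ z ∈ P, g (f z) = z) (hfg : ∀ z ∈ Q, f (g z) = z)
    {a : M} (ha : a ∈ P) : Comp (L := L) Q (f a) = f '' Comp (L := L) P a := by
  apply Set.Subset.antisymm
  · intro y hy
    have hyQ : y ∈ Q := comp_subset_of_mem (hf.1 a ha) hy
    have h1 : Conn (L := L) P (g (f a)) (g y) := hg.conn hy
    rw [hgf a ha] at h1
    exact ⟨g y, h1, hfg y hyQ⟩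
  · rintro y ⟨z, hz, rfl⟩
    exact hf.conn hz

lemma mem_comp_image_iff {f g : M → M} {P Q : Set M} (hf : GoodMap (L := L) f P Q)
    (hg : GoodMap (L := L) g Q P) (hgf : ∀ z ∈ P, g (f z) = z) (hfg : ∀ z ∈ Q, f (g z) = z)
    {a : M} (ha : a ∈ P) (y : M) :
    y ∈ Comp (L := L) Q (f a) ↔ ∃ z, z ∈ Comp (L := L) P a ∧ f z = y := by
  rw [comp_image_eq hf hg hgf hfg ha]
  exact Set.mem_image f _ y

/-- Transport of an isomorphism type of a component along mutually inverse good maps. -/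
noncomputable def compEquiv {f g : M → M} {P Q : Set M} (hf : GoodMap (L := L) f P Q)
    (hg : GoodMap (L := L) g Q P) (hgf : ∀ z ∈ P, g (f z) = z) (hfg : ∀ z ∈ Q, f (g z) = z)
    {a : M} (ha : a ∈ P) :
    (Comp (L := L) P a : Set M) ≃[L] (Comp (L := L) Q (f a) : Set M) where
  toFun := fun z => ⟨f z.1,
    (mem_comp_image_iff hf hg hgf hfg ha _).2 ⟨z.1, z.2, rfl⟩⟩
  invFun := fun y => ⟨g y.1, by
    obtain ⟨z, hz, hfz⟩ := (mem_comp_image_iff hf hg hgf hfg ha _).1 y.2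
    rw [← hfz, hgf z (comp_subset_of_mem ha hz)]
    exact hz⟩
  left_inv := fun z => Subtype.ext (hgf z.1 (comp_subset_of_mem ha z.2))
  right_inv := fun y => by
    obtain ⟨z, hz, hfz⟩ := (mem_comp_image_iff hf hg hgf hfg ha _).1 y.2
    refine Subtype.ext ?_
    show f (g y.1) = y.1
    rw [← hfz, hgf z (comp_subset_of_mem ha hz)]
  map_fun' := fun F => isEmptyElim F
  map_rel' := by
    intro n R x
    exact hf.2.2 n R (fun i => (x i).1) (fun i => comp_subset_of_mem ha (x i).2)

end Transport



lemma exists_pieces {α : Type u} (P : ℕ → Set α → Prop)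
    (hb : ∀ n k : ℕ, ∃ B : Set α, P n B ∧ k ≤ B.ncard) :
    ∃ Bl : ℕ → Set α, (∀ n, P n (Bl n)) ∧ StrictMono fun n => (Bl n).ncard := by
  choose F hF1 hF2 using hb
  let c : ℕ → ℕ := fun n => Nat.rec 1 (fun m prev => (F m prev).ncard + 1) n
  have hc : ∀ m, c (m + 1) = (F m (c m)).ncard + 1 := fun m => rfl
  refine ⟨fun n => F n (c n), fun n => hF1 n (c n), strictMono_nat_of_lt_succ fun m => ?_⟩
  have h1 : c (m + 1) ≤ (F (m + 1) (c (m + 1))).ncard := hF2 (m + 1) (c (m + 1))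
  have h2 := hc m
  show (F m (c m)).ncard < (F (m + 1) (c (m + 1))).ncard
  omega

end Helpers

section Main

set_option linter.unusedSectionVars false
set_option maxHeartbeats 1000000

theorem main_construction [L.IsRelational] [Finite (Σ n, L.Relations n)]
    (M : Type u) [L.Structure M] [Countable M]
    (hma : AtomicallyMA L M)
    (C : ℕ → Set M) (hCinj : Function.Injective C)
    (hcomp : ∀ i, IsMAComponent L (C i))
    (hinf : ∀ i, (C i).Infinite)
    (hiso : ∀ i j, Nonempty ((C i) ≃[L] (C j))) :
    ∃ A : Set (L.Substructure M),
      Cardinal.continuum ≤ Cardinal.mk A ∧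
      (∀ S ∈ A, Countable S ∧ Nonempty (M ↪[L] S)) ∧
      A.Pairwise fun S T => IsEmpty (S ≃[L] T) := by
  classical
  have hMne : Nonempty M := ⟨(hcomp 0).1.choose⟩
  have hCeq : ∀ i, ∀ x ∈ C i, C i = Comp (L := L) univ x := fun i x hx => (hcomp i).eq_comp hx
  have hCuniq : ∀ {p : M} {i j}, p ∈ C i → p ∈ C j → i = j := by
    intro p i j hi hj
    exact hCinj ((hCeq i p hi).trans (hCeq j p hj).symm)
  -- balls
  have hball : ∀ n k : ℕ, ∃ B : Set M, B ⊆ C (2 * n + 1) ∧ B.Finite ∧ B.Nonempty ∧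
      (∀ y ∈ B, ∀ z ∈ B, Conn (L := L) B y z) ∧ k ≤ B.ncard := by
    intro n k
    obtain ⟨x, hx⟩ := (hcomp (2 * n + 1)).1
    have hCx := hCeq (2 * n + 1) x hx
    have hinf' : (Comp (L := L) univ x).Infinite := hCx ▸ hinf (2 * n + 1)
    obtain ⟨B, h1, h2, h3, h4, h5⟩ := exists_conn_finite_subset hma x hinf' k
    exact ⟨B, hCx ▸ h1, h2, h3, h4, h5⟩
  obtain ⟨Bl, hBlspec, hBlcard⟩ := exists_pieces
    (fun n B => B ⊆ C (2 * n + 1) ∧ B.Finite ∧ B.Nonempty ∧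
      (∀ y ∈ B, ∀ z ∈ B, Conn (L := L) B y z))
    (fun n k => by
      obtain ⟨B, h1, h2, h3, h4, h5⟩ := hball n k
      exact ⟨B, ⟨h1, h2, h3, h4⟩, h5⟩)
  -- iso-type distinctness of the pieces
  have hBlne : ∀ {m n : ℕ}, Nonempty ((↥(Bl m)) ≃[L] (↥(Bl n))) → m = n := by
    intro m n he
    obtain ⟨e⟩ := he
    have hcard : (Bl m).ncard = (Bl n).ncard := by
      rw [← Nat.card_coe_set_eq, ← Nat.card_coe_set_eq]
      exact Nat.card_congr e.toEquiv
    exact hBlcard.injective hcard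
  -- the decoration set
  let D : Set M := {p | (∀ i, p ∉ C i) ∧
    ∃ m, Nonempty ((Comp (L := L) univ p : Set M) ≃[L] (Bl m : Set M))}
  have hDcomp : ∀ {p q : M}, p ∈ D → q ∈ Comp (L := L) univ p → q ∈ D := by
    intro p q hp hq
    have hcompeq := comp_eq_of_mem hq
    refine ⟨fun i hqi => hp.1 i ?_, ?_⟩
    · have := hCeq i q hqi
      rw [this, ← hcompeq]
      exact mem_comp_self _ _
    · obtain ⟨m, hm⟩ := hp.2
      exact ⟨m, by rwa [← hcompeq]⟩
  -- the universes
  let W : Set ℕ → Set M := fun X => (univ \ (D ∪ ⋃ n, C (2 * n + 1))) ∪ ⋃ n ∈ X, Bl n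
  have hBlW : ∀ {X : Set ℕ} {n}, n ∈ X → Bl n ⊆ W X := by
    intro X n hn
    exact fun z hz => Or.inr (Set.mem_biUnion hn hz)
  have hWodd : ∀ {X : Set ℕ} {m : ℕ} {b : M}, b ∈ W X → b ∈ C (2 * m + 1) → m ∈ X ∧ b ∈ Bl m := by
    intro X m b hbW hbC
    rcases hbW with hb | hb
    · exact absurd (Set.mem_iUnion.2 ⟨m, hbC⟩) (fun hmem => hb.2 (Or.inr hmem))
    · obtain ⟨m', hm', hbm'⟩ := Set.mem_iUnion₂.1 hb
      have : (2 : ℕ) * m' + 1 = 2 * m + 1 := hCuniq ((hBlspec m').1 hbm') hbC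
      have hmm : m' = m := by omega
      exact ⟨hmm ▸ hm', hmm ▸ hbm'⟩
  have hCevenW : ∀ {X : Set ℕ} (k : ℕ), C (2 * k) ⊆ W X := by
    intro X k z hz
    refine Or.inl ⟨trivial, ?_⟩
    rintro (hzD | hzodd)
    · exact hzD.1 (2 * k) hz
    · obtain ⟨n, hn⟩ := Set.mem_iUnion.1 hzodd
      have : (2 : ℕ) * n + 1 = 2 * k := hCuniq hn hz
      omega
  have hKeepSub : ∀ {X : Set ℕ} {p : M}, (∀ i, p ∉ C i) → p ∉ D →
      Comp (L := L) univ p ⊆ W X := by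
    intro X p hpC hpD z hz
    refine Or.inl ⟨trivial, ?_⟩
    rintro (hzD | hzodd)
    · exact hpD (hDcomp (p := z) ⟨fun i hzi => hpC i (by
        rw [hCeq i z hzi, ← comp_eq_of_mem hz]; exact mem_comp_self _ _), hzD.2⟩
        (by rw [← comp_eq_of_mem hz]; exact mem_comp_self _ _))
    · obtain ⟨n, hn⟩ := Set.mem_iUnion.1 hzodd
      exact hpC (2 * n + 1) (by
        rw [hCeq (2 * n + 1) z hn, ← comp_eq_of_mem hz]; exact mem_comp_self _ _)
  -- components of W X
  have hcompBl : ∀ {X : Set ℕ} {m : ℕ} {q : M}, m ∈ X → q ∈ Bl m →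
      Comp (L := L) (W X) q = Bl m := by
    intro X m q hm hq
    apply Set.Subset.antisymm
    · refine comp_subset_closed hq ?_
      rintro a ha b ⟨n, R, v, h1, h2, ⟨i, hi⟩, ⟨j, hj⟩⟩
      have haC : a ∈ C (2 * m + 1) := (hBlspec m).1 ha
      have hCa := hCeq (2 * m + 1) a haC
      have hbC : b ∈ C (2 * m + 1) := by
        rw [hCa]
        have hvi : v i ∈ Comp (L := L) univ a := hi ▸ mem_comp_self _ _
        exact hj ▸ edge_mem_comp h1 (fun _ => Set.mem_univ _) hvi j
      exact (hWodd (show b ∈ W X from hj ▸ h2 j) hbC).2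
    · intro z hz
      exact Conn.mono (hBlW hm) ((hBlspec m).2.2.2 q hq z hz)
  have hcompKeep : ∀ {X : Set ℕ} {q : M}, q ∈ W X → (∀ n, q ∉ C (2 * n + 1)) →
      Comp (L := L) (W X) q = Comp (L := L) univ q := by
    intro X q hqW hqodd
    have hsubW : Comp (L := L) univ q ⊆ W X := by
      by_cases hqc : ∃ i, q ∈ C i
      · obtain ⟨i, hi⟩ := hqc
        obtain ⟨k, rfl | rfl⟩ := Nat.even_or_odd' i
        · rw [← hCeq (2 * k) q hi] at *
          exact hCevenW k
        · exact absurd hi (hqodd k)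
      · push_neg at hqc
        have hqD : q ∉ D := by
          intro hqD
          rcases hqW with hq | hq
          · exact hq.2 (Or.inl hqD)
          · obtain ⟨m', hm', hbm'⟩ := Set.mem_iUnion₂.1 hq
            exact hqodd m' ((hBlspec m').1 hbm')
        exact hKeepSub hqc hqD
    apply Set.Subset.antisymm
    · exact comp_mono (Set.subset_univ _) q
    · intro z hz
      exact Conn.mono hsubW (comp_conn hz)
  -- the substructures
  let SX : Set ℕ → L.Substructure M := fun X => ⟨W X, fun {n} f => isEmptyElim f⟩
  -- the invariant
  have hInv : ∀ (X : Set ℕ) (n : ℕ),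
      (∃ q ∈ W X, Nonempty ((Comp (L := L) (W X) q : Set M) ≃[L] (Bl n : Set M))) ↔ n ∈ X := by
    intro X n
    constructor
    · rintro ⟨q, hqW, ⟨e⟩⟩
      by_cases hqodd : ∃ m, q ∈ C (2 * m + 1)
      · obtain ⟨m, hm⟩ := hqodd
        obtain ⟨hmX, hqBl⟩ := hWodd hqW hm
        have hcomp_eq := hcompBl hmX hqBl
        rw [hcomp_eq] at e
        exact (hBlne ⟨e⟩) ▸ hmX
      · push_neg at hqodd
        have hcomp_eq := hcompKeep hqW hqodd
        rw [hcomp_eq] at e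
        by_cases hqc : ∃ i, q ∈ C i
        · obtain ⟨i, hi⟩ := hqc
          exfalso
          have : Finite (Bl n : Set M) := (hBlspec n).2.1
          have : Finite (Comp (L := L) univ q : Set M) := Finite.of_equiv _ e.toEquiv.symm
          have hfin : (Comp (L := L) univ q).Finite := Set.finite_coe_iff.1 this
          rw [← hCeq i q hi] at hfin
          exact (hinf i) hfin
        · push_neg at hqc
          exfalso
          have hqD : q ∈ D := ⟨hqc, n, ⟨e⟩⟩
          rcases hqW with hq | hq
          · exact hq.2 (Or.inl hqD)
          · obtain ⟨m', hm', hbm'⟩ := Set.mem_iUnion₂.1 hq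
            exact hqodd m' ((hBlspec m').1 hbm')
    · intro hn
      obtain ⟨q, hq⟩ := (hBlspec n).2.2.1
      refine ⟨q, hBlW hn hq, ?_⟩
      rw [hcompBl hn hq]
      exact ⟨FirstOrder.Language.Equiv.refl L _⟩
  -- the embedding of M into each S X
  obtain ⟨enum, henum⟩ := Countable.exists_injective_nat M
  set repSet : Set M → M := fun A =>
    if h : ∃ z, z ∈ A ∧ enum z = sInf (enum '' A) then h.choose else hMne.some with hrepSet
  set rep : M → M := fun p => repSet (Comp (L := L) univ p) with hrepdef
  have hrepex : ∀ p : M, ∃ z, z ∈ Comp (L := L) univ p ∧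
      enum z = sInf (enum '' Comp (L := L) univ p) := by
    intro p
    have hne : (enum '' Comp (L := L) univ p).Nonempty := ⟨enum p, p, mem_comp_self _ _, rfl⟩
    obtain ⟨z, hz1, hz2⟩ := Nat.sInf_mem hne
    exact ⟨z, hz1, hz2⟩
  have hrep_mem : ∀ p : M, rep p ∈ Comp (L := L) univ p := by
    intro p
    simp only [hrepdef, hrepSet]
    rw [dif_pos (hrepex p)]
    exact (hrepex p).choose_spec.1
  have hrep_congr : ∀ {p q : M}, q ∈ Comp (L := L) univ p → rep q = rep p := by
    intro p q hq
    simp only [hrepdef]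
    rw [← comp_eq_of_mem hq]
  set cidx : M → ℕ := fun p => enum (rep p) with hcidx
  have hcidx_eq : ∀ {p q : M}, cidx p = cidx q →
      Comp (L := L) univ p = Comp (L := L) univ q := by
    intro p q h
    have hrr : rep p = rep q := henum h
    rw [comp_eq_of_mem (hrep_mem p), comp_eq_of_mem (hrep_mem q), hrr]
  -- piece embeddings for the C-components
  have hGood1 : ∀ i : ℕ, ∃ e : M → M, GoodMap (L := L) e (C i) (C (4 * i)) := by
    intro i
    obtain ⟨g⟩ := hiso i (4 * i)
    exact ⟨fun z => if h : z ∈ C i then (g.toEmbedding ⟨z, h⟩ : M) else z,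
      goodMap_of_embedding g.toEmbedding fun z hz => dif_pos hz⟩
  choose e1 he1 using hGood1
  -- piece embeddings for the decoration components
  have hDemb : ∀ z : M, ∃ e : M → M, z ∈ D →
      GoodMap (L := L) e (Comp (L := L) univ z) (C (4 * cidx z + 2)) := by
    intro z
    by_cases hz : z ∈ D
    · obtain ⟨m, ⟨eiso⟩⟩ := hz.2
      obtain ⟨g⟩ := hiso (2 * m + 1) (4 * cidx z + 2)
      set emb := (g.toEmbedding.comp ((inclusionEmb (hBlspec m).1).comp eiso.toEmbedding))
      exact ⟨fun q => if h : q ∈ Comp (L := L) univ z then (emb ⟨q, h⟩ : M) else q,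
        fun _ => goodMap_of_embedding emb fun q hq => dif_pos hq⟩
    · exact ⟨id, fun h => absurd h hz⟩
  choose e2 he2 using hDemb
  -- the global map and targets
  set hfun : M → M := fun p =>
    if hc : ∃ i, p ∈ C i then e1 hc.choose p
    else if _ : p ∈ D then e2 (rep p) p else p with hhfun
  set T : M → Set M := fun p =>
    if hc : ∃ i, p ∈ C i then C (4 * hc.choose)
    else if _ : p ∈ D then C (4 * cidx p + 2) else Comp (L := L) univ p with hT
  have hval1 : ∀ {p : M} {i : ℕ}, p ∈ C i → hfun p = e1 i p ∧ T p = C (4 * i) := by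
    intro p i hi
    have hc : ∃ j, p ∈ C j := ⟨i, hi⟩
    have hch : hc.choose = i := hCuniq hc.choose_spec hi
    constructor
    · simp only [hhfun]; rw [dif_pos hc, hch]
    · simp only [hT]; rw [dif_pos hc, hch]
  have hval2 : ∀ {p : M}, (¬∃ i, p ∈ C i) → p ∈ D →
      hfun p = e2 (rep p) p ∧ T p = C (4 * cidx p + 2) := by
    intro p hc hd
    constructor
    · simp only [hhfun]; rw [dif_neg hc, dif_pos hd]
    · simp only [hT]; rw [dif_neg hc, dif_pos hd]
  have hval3 : ∀ {p : M}, (¬∃ i, p ∈ C i) → p ∉ D →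
      hfun p = p ∧ T p = Comp (L := L) univ p := by
    intro p hc hd
    constructor
    · simp only [hhfun]; rw [dif_neg hc, dif_neg hd]
    · simp only [hT]; rw [dif_neg hc, dif_neg hd]
  -- stability of the cases along components
  have hstab1 : ∀ {p q : M} {i : ℕ}, p ∈ C i → q ∈ Comp (L := L) univ p → q ∈ C i := by
    intro p q i hi hq
    rw [hCeq i p hi]
    exact hq
  have hstab3 : ∀ {p q : M}, (¬∃ i, p ∈ C i) → p ∉ D → q ∈ Comp (L := L) univ p →
      (¬∃ i, q ∈ C i) ∧ q ∉ D := by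
    intro p q hpC hpD hq
    constructor
    · rintro ⟨i, hqi⟩
      exact hpC ⟨i, by rw [hCeq i q hqi, ← comp_eq_of_mem hq]; exact mem_comp_self _ _⟩
    · intro hqD
      exact hpD (hDcomp hqD (by rw [← comp_eq_of_mem hq]; exact mem_comp_self _ _))
  -- the per-component bundle
  have hbundle : ∀ p : M, ∃ g : M → M,
      GoodMap (L := L) g (Comp (L := L) univ p) (T p) ∧
      (∀ q ∈ Comp (L := L) univ p, hfun q = g q) := by
    intro p
    by_cases hc : ∃ i, p ∈ C i
    · obtain ⟨i, hi⟩ := hc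
      refine ⟨e1 i, ?_, ?_⟩
      · rw [(hval1 hi).2, ← hCeq i p hi]
        exact he1 i
      · intro q hq
        exact (hval1 (hstab1 hi hq)).1
    · by_cases hd : p ∈ D
      · refine ⟨e2 (rep p), ?_, ?_⟩
        · have h1 : T p = C (4 * cidx p + 2) := (hval2 hc hd).2
          have h2 := he2 (rep p) (hDcomp hd (hrep_mem p))
          have h3 : Comp (L := L) univ (rep p) = Comp (L := L) univ p :=
            (comp_eq_of_mem (hrep_mem p)).symm
          have h4 : cidx (rep p) = cidx p := by
            simp only [hcidx]
            rw [hrep_congr (hrep_mem p)]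
          rw [h1, ← h4, ← h3]
          exact h2
        · intro q hq
          have hqD : q ∈ D := hDcomp hd hq
          have hqc : ¬∃ i, q ∈ C i := fun ⟨i, hi⟩ => hqD.1 i hi
          rw [(hval2 hqc hqD).1, hrep_congr hq]
      · refine ⟨id, ⟨fun z hz => ?_, fun a _ b _ hab => hab, fun n R v hv => Iff.rfl⟩, ?_⟩
        · rw [(hval3 hc hd).2]
          exact hz
        · intro q hq
          exact (hval3 (hstab3 hc hd hq).1 (hstab3 hc hd hq).2).1
  have hA1 : ∀ p q : M, q ∈ Comp (L := L) univ p → hfun q ∈ T p := by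
    intro p q hq
    obtain ⟨g, hg, hval⟩ := hbundle p
    rw [hval q hq]
    exact hg.1 q hq
  have hA3 : ∀ (p : M) (a : M), a ∈ T p → Comp (L := L) univ a = T p := by
    intro p a ha
    by_cases hc : ∃ i, p ∈ C i
    · obtain ⟨i, hi⟩ := hc
      rw [(hval1 hi).2] at ha ⊢
      exact (hCeq _ a ha).symm
    · by_cases hd : p ∈ D
      · rw [(hval2 hc hd).2] at ha ⊢
        exact (hCeq _ a ha).symm
      · rw [(hval3 hc hd).2] at ha ⊢
        exact (comp_eq_of_mem ha).symm
  have hA2 : ∀ (X : Set ℕ) (p : M), T p ⊆ W X := by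
    intro X p
    by_cases hc : ∃ i, p ∈ C i
    · obtain ⟨i, hi⟩ := hc
      rw [(hval1 hi).2, show (4 : ℕ) * i = 2 * (2 * i) by ring]
      exact hCevenW _
    · by_cases hd : p ∈ D
      · rw [(hval2 hc hd).2, show (4 : ℕ) * cidx p + 2 = 2 * (2 * cidx p + 1) by ring]
        exact hCevenW _
      · push_neg at hc
        rw [(hval3 (by push_neg; exact hc) hd).2]
        exact hKeepSub hc hd
  have hA6 : ∀ p q : M, T p = T q → Comp (L := L) univ p = Comp (L := L) univ q := by
    have key : ∀ p : M, (∃ i, p ∈ C i ∧ T p = C (4 * i) ∧ Comp (L := L) univ p = C i) ∨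
        ((¬∃ i, p ∈ C i) ∧ p ∈ D ∧ T p = C (4 * cidx p + 2)) ∨
        ((¬∃ i, p ∈ C i) ∧ p ∉ D ∧ T p = Comp (L := L) univ p) := by
      intro p
      by_cases hc : ∃ i, p ∈ C i
      · obtain ⟨i, hi⟩ := hc
        exact Or.inl ⟨i, hi, (hval1 hi).2, (hCeq i p hi).symm⟩
      · by_cases hd : p ∈ D
        · exact Or.inr (Or.inl ⟨hc, hd, (hval2 hc hd).2⟩)
        · exact Or.inr (Or.inr ⟨hc, hd, (hval3 hc hd).2⟩)
    intro p q hTeq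
    rcases key p with ⟨i, hi, hT1, hC1⟩ | ⟨hc1, hd1, hT1⟩ | ⟨hc1, hd1, hT1⟩ <;>
      rcases key q with ⟨j, hj, hT2, hC2⟩ | ⟨hc2, hd2, hT2⟩ | ⟨hc2, hd2, hT2⟩
    · rw [hT1, hT2] at hTeq
      have hij := hCinj hTeq
      have : i = j := by omega
      rw [hC1, hC2, this]
    · rw [hT1, hT2] at hTeq
      have := hCinj hTeq
      omega
    · exfalso
      apply hc2
      refine ⟨4 * i, ?_⟩
      rw [← hT1, hTeq, hT2]
      exact mem_comp_self _ _
    · rw [hT1, hT2] at hTeq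
      have := hCinj hTeq
      omega
    · rw [hT1, hT2] at hTeq
      have := hCinj hTeq
      exact hcidx_eq (by omega)
    · exfalso
      apply hc2
      refine ⟨4 * cidx p + 2, ?_⟩
      rw [← hT1, hTeq, hT2]
      exact mem_comp_self _ _
    · exfalso
      apply hc1
      refine ⟨4 * j, ?_⟩
      rw [← hT2, ← hTeq, hT1]
      exact mem_comp_self _ _
    · exfalso
      apply hc1
      refine ⟨4 * cidx q + 2, ?_⟩
      rw [← hT2, ← hTeq, hT1]
      exact mem_comp_self _ _
    · rw [← hT1, hTeq, hT2]
  have hinjfun : Function.Injective hfun := by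
    intro a b hab
    have h1 : hfun a ∈ T a := hA1 a a (mem_comp_self _ _)
    have h2 : hfun b ∈ T b := hA1 b b (mem_comp_self _ _)
    have hT3 : T a = T b := by
      rw [← hA3 a (hfun a) h1, hab, hA3 b (hfun b) h2]
    have hcompeq := hA6 a b hT3
    obtain ⟨g, hg, hval⟩ := hbundle a
    have hb' : b ∈ Comp (L := L) univ a := by
      rw [hcompeq]; exact mem_comp_self _ _
    refine hg.2.1 (mem_comp_self _ _) hb' ?_
    rw [← hval a (mem_comp_self _ _), ← hval b hb']
    exact hab
  have hrelfun : ∀ (n : ℕ) (R : L.Relations n) (v : Fin n → M),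
      Structure.RelMap R (fun i => hfun (v i)) ↔ Structure.RelMap R v := by
    intro n R v
    rcases isEmpty_or_nonempty (Fin n) with he | hne
    · have hveq : (fun i => hfun (v i)) = v := funext fun i => he.elim i
      rw [hveq]
    · obtain ⟨j0⟩ := hne
      constructor
      · intro hrel
        have hmem : ∀ i, hfun (v i) ∈ Comp (L := L) univ (hfun (v j0)) := fun i =>
          edge_mem_comp hrel (fun _ => mem_univ _) (mem_comp_self _ _) i
        have hTeq : ∀ i, T (v i) = T (v j0) := by
          intro i
          rw [← hA3 (v i) (hfun (v i)) (hA1 _ _ (mem_comp_self _ _)),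
            ← hA3 (v j0) (hfun (v j0)) (hA1 _ _ (mem_comp_self _ _))]
          exact (comp_eq_of_mem (hmem i)).symm
        have hsame : ∀ i, v i ∈ Comp (L := L) univ (v j0) := by
          intro i
          rw [← hA6 (v i) (v j0) (hTeq i)]
          exact mem_comp_self _ _
        obtain ⟨g, hg, hval⟩ := hbundle (v j0)
        have hveq : (fun i => hfun (v i)) = fun i => g (v i) :=
          funext fun i => hval _ (hsame i)
        rw [hveq] at hrel
        exact (hg.2.2 n R v hsame).1 hrel
      · intro hrel
        have hsame : ∀ i, v i ∈ Comp (L := L) univ (v j0) := fun i =>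
          edge_mem_comp hrel (fun _ => mem_univ _) (mem_comp_self _ _) i
        obtain ⟨g, hg, hval⟩ := hbundle (v j0)
        have hveq : (fun i => hfun (v i)) = fun i => g (v i) :=
          funext fun i => hval _ (hsame i)
        rw [hveq]
        exact (hg.2.2 n R v hsame).2 hrel
  have hEmb : ∀ X : Set ℕ, Nonempty (M ↪[L] ↥(SX X)) := by
    intro X
    refine ⟨⟨⟨fun p => ⟨hfun p, hA2 X p (hA1 p p (mem_comp_self _ _))⟩, ?_⟩, ?_, ?_⟩⟩
    · intro a b hab
      exact hinjfun (congrArg Subtype.val hab)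
    · intro n f
      exact isEmptyElim f
    · intro n R x
      exact hrelfun n R x
  -- transporting the invariant along isomorphisms
  have hkey : ∀ X Y : Set ℕ, (↥(SX X) ≃[L] ↥(SX Y)) → X ⊆ Y := by
    intro X Y g n hnX
    have gset : (↥(W X)) ≃[L] (↥(W Y)) :=
      { toEquiv := g.toEquiv, map_fun' := fun f => isEmptyElim f,
        map_rel' := fun r x => g.map_rel' r x }
    set f : M → M := fun z => if h : z ∈ W X then (gset ⟨z, h⟩ : M) else z with hf
    set finv : M → M := fun z => if h : z ∈ W Y then (gset.symm ⟨z, h⟩ : M) else z with hfinv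
    have hgf : GoodMap (L := L) f (W X) (W Y) :=
      goodMap_of_embedding gset.toEmbedding (fun z hz => by
        rw [hf]
        simp only [dif_pos hz]
        rfl)
    have hginv : GoodMap (L := L) finv (W Y) (W X) :=
      goodMap_of_embedding gset.symm.toEmbedding (fun z hz => by
        rw [hfinv]
        simp only [dif_pos hz]
        rfl)
    have hlr : ∀ z ∈ W X, finv (f z) = z := by
      intro z hz
      have h1 : f z = ↑(gset ⟨z, hz⟩) := dif_pos hz
      have h2 : f z ∈ W Y := h1 ▸ (gset ⟨z, hz⟩).2
      have h3 : finv (f z) = ↑(gset.symm ⟨f z, h2⟩) := dif_pos h2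
      have h4 : (⟨f z, h2⟩ : ↥(W Y)) = gset ⟨z, hz⟩ := Subtype.ext h1
      rw [h3, h4, FirstOrder.Language.Equiv.symm_apply_apply]
    have hrl : ∀ z ∈ W Y, f (finv z) = z := by
      intro z hz
      have h1 : finv z = ↑(gset.symm ⟨z, hz⟩) := dif_pos hz
      have h2 : finv z ∈ W X := h1 ▸ (gset.symm ⟨z, hz⟩).2
      have h3 : f (finv z) = ↑(gset ⟨finv z, h2⟩) := dif_pos h2
      have h4 : (⟨finv z, h2⟩ : ↥(W X)) = gset.symm ⟨z, hz⟩ := Subtype.ext h1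
      rw [h3, h4, FirstOrder.Language.Equiv.apply_symm_apply]
    obtain ⟨q, hqW, ⟨e⟩⟩ := (hInv X n).2 hnX
    have hce := compEquiv hgf hginv hlr hrl hqW
    refine (hInv Y n).1 ⟨f q, hgf.1 q hqW, ⟨FirstOrder.Language.Equiv.comp e hce.symm⟩⟩
  have hNoIso : ∀ X Y : Set ℕ, X ≠ Y → IsEmpty (↥(SX X) ≃[L] ↥(SX Y)) := by
    intro X Y hne
    constructor
    intro g
    exact hne (Set.Subset.antisymm (hkey X Y g) (hkey Y X g.symm))
  have hSXinj : Function.Injective SX := by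
    intro X Y hXY
    by_contra hne
    exact (hNoIso X Y hne).false (hXY ▸ FirstOrder.Language.Equiv.refl L ↥(SX X))
  refine ⟨Set.range SX, ?_, ?_, ?_⟩
  · have hinj2 : Function.Injective fun X : Set ℕ => (⟨SX X, X, rfl⟩ : ↑(Set.range SX)) :=
      fun X Y h => hSXinj (congrArg Subtype.val h)
    have hle := Cardinal.lift_mk_le'.2 ⟨⟨_, hinj2⟩⟩
    simp only [Cardinal.mk_set, Cardinal.mk_nat, Cardinal.two_power_aleph0,
      Cardinal.lift_continuum, Cardinal.lift_id'] at hle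
    exact hle
  · rintro S ⟨X, rfl⟩
    exact ⟨inferInstance, hEmb X⟩
  · rintro S ⟨X, rfl⟩ T ⟨Y, rfl⟩ hST
    exact hNoIso X Y fun h => hST (congrArg SX h)

end Main

/-- Infinitely many pairwise isomorphic infinite MA-connected components yield 2^ℵ₀
siblings. -/
theorem isomorphic_infinite_components_continuum_siblings
    [L.IsRelational] [Finite (Σ n, L.Relations n)]
    (M : Type u) [L.Structure M] [Countable M]
    (hma : AtomicallyMA L M)
    (C : ℕ → Set M) (hCinj : Function.Injective C)
    (hcomp : ∀ i, IsMAComponent L (C i))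
    (hinf : ∀ i, (C i).Infinite)
    (hiso : ∀ i j, Nonempty ((C i) ≃[L] (C j))) :
    HasContinuumManySiblings L M := by
  exact main_construction L M hma C hCinj hcomp hinf hiso

end Stmt18
end
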